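/- arXiv:2502.05541 — 6 statements merged into one kernel-verified Lean document; each statement's English description precedes it below -/
import Mathlib

section
/- Assume vol_g(Ω) < ∞ and the L¹-Sobolev inequality: there is Λ > 0 such that for every f ∈ C_c^∞(Ω), (∫_Ω |f|^{4/3} dvol_g)^{3/4} ≤ Λ ∫_Ω |df|_g dvol_g. Set γ := 1/(2Λ). Then every u ∈ C_c^∞(Ω) with (∫_Ω |du|_g⁴ dvol_g)^{1/4} ≤ 1 satisfies ∫_Ω e^{(4γ/3) u} dvol_g ≤ 2^{4/3} · vol_g(Ω). -/
open MeasureTheory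

noncomputable section

/-- Points of the coordinate space `ℝ⁴`. -/
abbrev V4 : Type := Fin 4 → ℝ

/-- The `i`-th partial derivative `∂ᵢ u (x)`. -/
def pd (i : Fin 4) (u : V4 → ℝ) (x : V4) : ℝ :=
  fderiv ℝ u x (Pi.single i 1)

/-- `√(det g(x))`, the density of the Riemannian volume measure `dvol_g`. -/
def sqrtDet (g : V4 → Matrix (Fin 4) (Fin 4) ℝ) (x : V4) : ℝ :=
  Real.sqrt (g x).det

/-- `⟨du, dv⟩_g (x) = Σ_{i,j} (g(x)⁻¹)_{ij} ∂ᵢu(x) ∂ⱼv(x)`. -/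
def gInner (g : V4 → Matrix (Fin 4) (Fin 4) ℝ) (u v : V4 → ℝ) (x : V4) : ℝ :=
  ∑ i, ∑ j, (g x)⁻¹ i j * pd i u x * pd j v x

/-- `|du|_g²(x)`. -/
def gNormSq (g : V4 → Matrix (Fin 4) (Fin 4) ℝ) (u : V4 → ℝ) (x : V4) : ℝ :=
  gInner g u u x

/-- The Laplace–Beltrami operator
`Δ_g u = (det g)^{-1/2} Σ_i ∂ᵢ(√(det g) Σ_j (g⁻¹)_{ij} ∂ⱼ u)`. -/
def lap (g : V4 → Matrix (Fin 4) (Fin 4) ℝ) (u : V4 → ℝ) (x : V4) : ℝ :=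
  (sqrtDet g x)⁻¹ *
    ∑ i, pd i (fun y => sqrtDet g y * ∑ j, (g y)⁻¹ i j * pd j u y) x

/-- `f ∈ C_c^∞(Ω)`: a smooth compactly supported function with support inside `Ω`. -/
structure IsTestFn (Ω : Set V4) (f : V4 → ℝ) : Prop where
  smooth : ContDiff ℝ (⊤ : ℕ∞) f
  compactSupport : HasCompactSupport f
  support_subset : tsupport f ⊆ Ω

/-- `g` is a smooth Riemannian metric (in coordinates) on the open set `Ω`. -/
structure IsMetric (Ω : Set V4) (g : V4 → Matrix (Fin 4) (Fin 4) ℝ) : Prop where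
  isOpen : IsOpen Ω
  smooth : ∀ i j, ContDiffOn ℝ (⊤ : ℕ∞) (fun x => g x i j) Ω
  symm : ∀ x ∈ Ω, (g x).IsSymm
  posDef : ∀ x ∈ Ω, (g x).PosDef

lemma memLp_ofReal_of_integrable {α : Type*} [MeasurableSpace α] {μ : Measure α} {f : α → ℝ}
    {p : ℝ} (hp : 0 < p) (hf : AEStronglyMeasurable f μ)
    (hi : Integrable (fun x => |f x| ^ p) μ) : MemLp f (ENNReal.ofReal p) μ := by
  have hne : (ENNReal.ofReal p) ≠ 0 := by simp [ENNReal.ofReal_eq_zero, not_le, hp]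
  have h2 : MemLp (fun x => ‖f x‖ ^ (ENNReal.ofReal p).toReal)
      ((ENNReal.ofReal p) / (ENNReal.ofReal p)) μ := by
    rw [ENNReal.div_self hne ENNReal.ofReal_ne_top, memLp_one_iff_integrable,
      ENNReal.toReal_ofReal hp.le]
    simpa [Real.norm_eq_abs] using hi
  exact (memLp_norm_rpow_iff hf hne ENNReal.ofReal_ne_top).mp h2

lemma add_rpow_le_two_rpow {a b p : ℝ} (ha : 0 ≤ a) (hb : 0 ≤ b) (hp : 1 ≤ p) :
    (a + b) ^ p ≤ 2 ^ (p - 1) * (a ^ p + b ^ p) := by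
  have h := NNReal.coe_le_coe.mpr
    (NNReal.rpow_add_le_mul_rpow_add_rpow a.toNNReal b.toNNReal hp)
  push_cast [NNReal.coe_rpow, Real.coe_toNNReal _ ha, Real.coe_toNNReal _ hb] at h
  convert h using 3

/-- Under the `L¹`-Sobolev inequality and finite volume, a
Moser–Trudinger-type exponential integrability holds with `γ = 1/(2Λ)`. -/
theorem moser_trudinger_of_sobolev_L1
    (Ω : Set V4) (g : V4 → Matrix (Fin 4) (Fin 4) ℝ) (hg : IsMetric Ω g)
    (hvol : IntegrableOn (sqrtDet g) Ω)
    (Λ : ℝ) (hΛ : 0 < Λ)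
    (hSob : ∀ f : V4 → ℝ, IsTestFn Ω f →
      (∫ x in Ω, |f x| ^ (4 / 3 : ℝ) * sqrtDet g x) ^ (3 / 4 : ℝ) ≤
        Λ * ∫ x in Ω, Real.sqrt (gNormSq g f x) * sqrtDet g x) :
    ∀ u : V4 → ℝ, IsTestFn Ω u →
      (∫ x in Ω, (gNormSq g u x) ^ 2 * sqrtDet g x) ^ (1 / 4 : ℝ) ≤ 1 →
      ∫ x in Ω, Real.exp (4 * (1 / (2 * Λ)) / 3 * u x) * sqrtDet g x ≤
        (2 : ℝ) ^ (4 / 3 : ℝ) * ∫ x in Ω, sqrtDet g x := by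
  intro u hu hgrad
  set α : ℝ := 1 / (2 * Λ) with hα_def
  have hα : 0 < α := by positivity
  have hΩm : MeasurableSet Ω := hg.isOpen.measurableSet
  set q : V4 → ℝ := gNormSq g u with hq_def
  set d : V4 → ℝ := sqrtDet g with hd_def
  have hd_nonneg : ∀ x, 0 ≤ d x := fun x => Real.sqrt_nonneg _
  -- the test function f = exp(α u) - 1
  set f : V4 → ℝ := fun x => Real.exp (α * u x) - 1 with hf_def
  have hud : ∀ x, DifferentiableAt ℝ u x := fun x => hu.smooth.differentiable (by simp) x
  have hf_test : IsTestFn Ω f := by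
    have hsmooth : ContDiff ℝ (⊤ : ℕ∞) f :=
      (Real.contDiff_exp.comp (contDiff_const.mul hu.smooth)).sub contDiff_const
    have hsupp : tsupport f ⊆ tsupport u := by
      apply closure_mono
      intro x hx
      simp only [Function.mem_support] at hx ⊢
      intro hux
      exact hx (by simp [hf_def, hux])
    exact ⟨hsmooth, hu.compactSupport.of_isClosed_subset isClosed_closure hsupp,
      hsupp.trans hu.support_subset⟩
  -- derivative of f
  have hpdf : ∀ i x, pd i f x = (α * Real.exp (α * u x)) * pd i u x := by
    intro i x
    have h1 : DifferentiableAt ℝ (fun y => α * u y) x := (hud x).const_mul α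
    show fderiv ℝ f x (Pi.single i 1) = _
    have : fderiv ℝ f x = Real.exp (α * u x) • (α • fderiv ℝ u x) := by
      rw [hf_def]
      rw [fderiv_sub_const, fderiv_exp h1, fderiv_const_mul (hud x) α]
    rw [this]
    simp [pd]
    ring
  -- |df|² = (α e^{αu})² |du|²
  have hgnf : ∀ x, gNormSq g f x = (α * Real.exp (α * u x)) ^ 2 * q x := by
    intro x
    simp only [gNormSq, gInner, hq_def, Finset.mul_sum]
    refine Finset.sum_congr rfl fun i _ => ?_
    refine Finset.sum_congr rfl fun j _ => ?_
    rw [hpdf, hpdf]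
    ring
  have hsqf : ∀ x, Real.sqrt (gNormSq g f x)
      = α * Real.exp (α * u x) * Real.sqrt (q x) := by
    intro x
    rw [hgnf x, Real.sqrt_mul (sq_nonneg _), Real.sqrt_sq (by positivity)]
  -- continuity and measurability facts
  have hu_cont : Continuous u := hu.smooth.continuous
  have hpd_cont : ∀ i, Continuous (pd i u) := fun i =>
    (hu.smooth.continuous_fderiv (by simp)).clm_apply continuous_const
  have hg_cont : ContinuousOn (fun x => g x) Ω :=
    continuousOn_pi.2 fun i => continuousOn_pi.2 fun j => (hg.smooth i j).continuousOn
  have hdet_cont : ContinuousOn (fun x => (g x).det) Ω :=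
    (continuous_id.matrix_det).comp_continuousOn hg_cont
  have hinv_cont : ∀ i j, ContinuousOn (fun x => (g x)⁻¹ i j) Ω := by
    intro i j
    have h1 : ContinuousOn (fun x => ((g x).det)⁻¹) Ω :=
      hdet_cont.inv₀ fun x hx => (hg.posDef x hx).det_pos.ne'
    have hadj : ContinuousOn (fun x => (g x).adjugate) Ω :=
      (continuous_id.matrix_adjugate).comp_continuousOn hg_cont
    have h2 : ContinuousOn (fun x => (g x).adjugate i j) Ω :=
      continuousOn_pi.1 (continuousOn_pi.1 hadj i) j
    refine (h1.mul h2).congr fun x _ => ?_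
    simp [Matrix.inv_def, Ring.inverse_eq_inv', Matrix.smul_apply, smul_eq_mul]
  have hq_cont : ContinuousOn q Ω := by
    have h := continuousOn_finset_sum (t := Ω) (Finset.univ (α := Fin 4))
      (f := fun i x => ∑ j, (g x)⁻¹ i j * pd i u x * pd j u x) fun i _ =>
        continuousOn_finset_sum (Finset.univ (α := Fin 4)) fun j _ =>
          ((hinv_cont i j).mul (hpd_cont i).continuousOn).mul (hpd_cont j).continuousOn
    exact h
  -- nonnegativity of q on Ω
  have hq_nonneg_on : ∀ x ∈ Ω, 0 ≤ q x := by
    intro x hx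
    have hP := ((hg.posDef x hx).inv).posSemidef
    have h := hP.dotProduct_mulVec_nonneg fun i => pd i u x
    have h2 : (0:ℝ) ≤ ∑ i, pd i u x * ∑ j, (g x)⁻¹ i j * pd j u x := by
      simpa [dotProduct, Matrix.mulVec] using h
    have heq : q x = ∑ i, pd i u x * ∑ j, (g x)⁻¹ i j * pd j u x := by
      simp only [hq_def, gNormSq, gInner]
      refine Finset.sum_congr rfl fun i _ => ?_
      rw [Finset.mul_sum]
      exact Finset.sum_congr rfl fun j _ => by ring
    rw [heq]; exact h2
  -- q vanishes outside the support of u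
  have hq_zero : ∀ x ∉ tsupport u, q x = 0 := by
    intro x hx
    have hfd : fderiv ℝ u x = 0 := by
      by_contra h
      exact hx (support_fderiv_subset (𝕜 := ℝ) (Function.mem_support.mpr h))
    simp [hq_def, gNormSq, gInner, pd, hfd]
  -- bounds
  obtain ⟨Cq, hCq⟩ := (hu.compactSupport).exists_bound_of_continuousOn
    (hq_cont.mono hu.support_subset)
  have hqb : ∀ x, |q x| ≤ max Cq 0 := by
    intro x
    by_cases hx : x ∈ tsupport u
    · exact le_trans (hCq x hx) (le_max_left _ _)
    · simp [hq_zero x hx]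
  obtain ⟨Cu, hCu⟩ := (hu.compactSupport).exists_bound_of_continuousOn hu_cont.continuousOn
  have hub : ∀ x, u x ≤ max Cu 0 := by
    intro x
    by_cases hx : x ∈ tsupport u
    · exact le_trans (le_abs_self _) (le_trans (hCu x hx) (le_max_left _ _))
    · rw [image_eq_zero_of_notMem_tsupport hx]; exact le_max_right _ _
  set E : ℝ := Real.exp (α * max Cu 0) with hE_def
  have hexpE : ∀ x, Real.exp (α * u x) ≤ E :=
    fun x => Real.exp_le_exp.mpr (mul_le_mul_of_nonneg_left (hub x) hα.le)
  have hfabs : ∀ x, |f x| ≤ E + 1 := by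
    intro x
    calc |f x| ≤ |Real.exp (α * u x)| + |(1:ℝ)| := abs_sub _ _
    _ ≤ E + 1 := by
        rw [abs_one, abs_of_pos (Real.exp_pos _)]
        exact add_le_add_left (hexpE x) 1
  -- measurability
  have hd_meas : AEStronglyMeasurable d (volume.restrict Ω) := hvol.aestronglyMeasurable
  have hq_meas : AEStronglyMeasurable q (volume.restrict Ω) :=
    hq_cont.aestronglyMeasurable hΩm
  -- integrability of bounded multiples of d
  have key_int : ∀ (h : V4 → ℝ) (C : ℝ), AEStronglyMeasurable h (volume.restrict Ω) →
      (∀ x, |h x| ≤ C) → Integrable (fun x => h x * d x) (volume.restrict Ω) := by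
    intro h C hm hb
    refine Integrable.mono' (hvol.const_mul C) (hm.mul hd_meas)
      (Filter.Eventually.of_forall fun x => ?_)
    rw [Real.norm_eq_abs, abs_mul, abs_of_nonneg (hd_nonneg x)]
    exact mul_le_mul_of_nonneg_right (hb x) (hd_nonneg x)
  have hf_cont : Continuous f := hf_test.smooth.continuous
  -- main integrability facts
  have IY : Integrable (fun x => Real.exp (4 * α / 3 * u x) * d x) (volume.restrict Ω) := by
    refine key_int _ (Real.exp (4 * α / 3 * max Cu 0))
      (Real.continuous_exp.comp (continuous_const.mul hu_cont)).aestronglyMeasurable fun x => ?_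
    rw [abs_of_pos (Real.exp_pos _)]
    exact Real.exp_le_exp.mpr (mul_le_mul_of_nonneg_left (hub x) (by positivity))
  have I1 : Integrable (fun x => q x ^ 2 * d x) (volume.restrict Ω) := by
    refine key_int _ ((max Cq 0) ^ 2) (by simpa [pow_two, Pi.mul_def] using hq_meas.mul hq_meas) fun x => ?_
    rw [abs_pow]
    exact pow_le_pow_left₀ (abs_nonneg _) (hqb x) 2
  have IS : Integrable (fun x => |f x| ^ (4/3 : ℝ) * d x) (volume.restrict Ω) := by
    refine key_int _ ((E + 1) ^ (4/3 : ℝ))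
      (hf_cont.abs.rpow_const fun x => Or.inr (by norm_num)).aestronglyMeasurable fun x => ?_
    rw [abs_of_nonneg (Real.rpow_nonneg (abs_nonneg _) _)]
    exact Real.rpow_le_rpow (abs_nonneg _) (hfabs x) (by norm_num)
  -- Hölder setup
  set A : V4 → ℝ := fun x => Real.sqrt (q x) * d x ^ (1/4 : ℝ) with hA_def
  set B : V4 → ℝ := fun x => Real.exp (α * u x) * d x ^ (3/4 : ℝ) with hB_def
  have hA_nonneg : ∀ x, 0 ≤ A x := fun x =>
    mul_nonneg (Real.sqrt_nonneg _) (Real.rpow_nonneg (hd_nonneg x) _)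
  have hB_nonneg : ∀ x, 0 ≤ B x := fun x =>
    mul_nonneg (Real.exp_pos _).le (Real.rpow_nonneg (hd_nonneg x) _)
  have hd14_meas : AEStronglyMeasurable (fun x => d x ^ (1/4 : ℝ)) (volume.restrict Ω) :=
    (Real.continuous_rpow_const (by norm_num)).comp_aestronglyMeasurable hd_meas
  have hd34_meas : AEStronglyMeasurable (fun x => d x ^ (3/4 : ℝ)) (volume.restrict Ω) :=
    (Real.continuous_rpow_const (by norm_num)).comp_aestronglyMeasurable hd_meas
  have hA_meas : AEStronglyMeasurable A (volume.restrict Ω) :=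
    (Real.continuous_sqrt.comp_aestronglyMeasurable hq_meas).mul hd14_meas
  have hB_meas : AEStronglyMeasurable B (volume.restrict Ω) :=
    (Real.continuous_exp.comp (continuous_const.mul hu_cont)).aestronglyMeasurable.mul hd34_meas
  have hA4 : (fun x => |A x| ^ (4:ℝ)) =ᵐ[volume.restrict Ω] (fun x => q x ^ 2 * d x) := by
    filter_upwards [ae_restrict_mem hΩm] with x hx
    have hqx := hq_nonneg_on x hx
    rw [abs_of_nonneg (hA_nonneg x), hA_def,
      Real.mul_rpow (Real.sqrt_nonneg _) (Real.rpow_nonneg (hd_nonneg x) _)]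
    have h1 : Real.sqrt (q x) ^ (4:ℝ) = q x ^ 2 := by
      rw [show (4:ℝ) = ((4:ℕ):ℝ) by norm_num, Real.rpow_natCast]
      calc Real.sqrt (q x) ^ (4:ℕ) = (Real.sqrt (q x) ^ 2) ^ 2 := by ring
      _ = q x ^ 2 := by rw [Real.sq_sqrt hqx]
    have h2 : (d x ^ (1/4:ℝ)) ^ (4:ℝ) = d x := by
      rw [← Real.rpow_mul (hd_nonneg x)]
      norm_num
    rw [h1, h2]
  have hA4_int : Integrable (fun x => |A x| ^ (4:ℝ)) (volume.restrict Ω) := I1.congr hA4.symm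
  have hMemA : MemLp A (ENNReal.ofReal 4) (volume.restrict Ω) :=
    memLp_ofReal_of_integrable (by norm_num) hA_meas hA4_int
  have hB43 : ∀ x, |B x| ^ (4/3:ℝ) = Real.exp (4 * α / 3 * u x) * d x := by
    intro x
    rw [abs_of_nonneg (hB_nonneg x), hB_def,
      Real.mul_rpow (Real.exp_pos _).le (Real.rpow_nonneg (hd_nonneg x) _)]
    have h1 : Real.exp (α * u x) ^ (4/3:ℝ) = Real.exp (4 * α / 3 * u x) := by
      rw [Real.rpow_def_of_pos (Real.exp_pos _), Real.log_exp]
      congr 1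
      ring
    have h2 : (d x ^ (3/4:ℝ)) ^ (4/3:ℝ) = d x := by
      rw [← Real.rpow_mul (hd_nonneg x)]
      norm_num
    rw [h1, h2]
  have hB43_int : Integrable (fun x => |B x| ^ (4/3:ℝ)) (volume.restrict Ω) :=
    IY.congr (Filter.Eventually.of_forall fun x => (hB43 x).symm)
  have hMemB : MemLp B (ENNReal.ofReal (4/3)) (volume.restrict Ω) :=
    memLp_ofReal_of_integrable (by norm_num) hB_meas hB43_int
  have hpq : Real.HolderConjugate 4 (4/3) := ⟨by norm_num, by norm_num, by norm_num⟩
  have hHolder := integral_mul_le_Lp_mul_Lq_of_nonneg hpq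
    (Filter.Eventually.of_forall hA_nonneg) (Filter.Eventually.of_forall hB_nonneg) hMemA hMemB
  -- names for the three integrals
  set Y : ℝ := ∫ x in Ω, Real.exp (4 * α / 3 * u x) * d x with hY_def
  set S : ℝ := ∫ x in Ω, |f x| ^ (4/3 : ℝ) * d x with hS_def
  set V : ℝ := ∫ x in Ω, d x with hV_def
  set T : ℝ := ∫ x in Ω, Real.exp (α * u x) * Real.sqrt (q x) * d x with hT_def
  have hY0 : 0 ≤ Y := integral_nonneg fun x => mul_nonneg (Real.exp_pos _).le (hd_nonneg x)
  have hS0 : 0 ≤ S := integral_nonneg fun x =>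
    mul_nonneg (Real.rpow_nonneg (abs_nonneg _) _) (hd_nonneg x)
  -- rewrite the Hölder inequality
  have hAB : (∫ x in Ω, A x * B x) = T := by
    refine integral_congr_ae (Filter.Eventually.of_forall fun x => ?_)
    have hdd : d x ^ (1/4:ℝ) * d x ^ (3/4:ℝ) = d x := by
      rw [← Real.rpow_add' (hd_nonneg x) (by norm_num)]
      norm_num
    calc A x * B x
        = Real.exp (α * u x) * Real.sqrt (q x) * (d x ^ (1/4:ℝ) * d x ^ (3/4:ℝ)) := by
          rw [hA_def, hB_def]; ring
      _ = Real.exp (α * u x) * Real.sqrt (q x) * d x := by rw [hdd]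
  have hA4' : (∫ x in Ω, A x ^ (4:ℝ)) = ∫ x in Ω, q x ^ 2 * d x := by
    have he : (fun x => A x ^ (4:ℝ)) =ᵐ[volume.restrict Ω] fun x => |A x| ^ (4:ℝ) :=
      Filter.Eventually.of_forall fun x => show A x ^ (4:ℝ) = |A x| ^ (4:ℝ) by
        rw [abs_of_nonneg (hA_nonneg x)]
    exact integral_congr_ae (he.trans hA4)
  have hB43' : (∫ x in Ω, B x ^ ((4:ℝ)/3)) = Y := by
    refine integral_congr_ae (Filter.Eventually.of_forall fun x => ?_)
    have h := hB43 x
    rw [abs_of_nonneg (hB_nonneg x)] at h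
    exact h
  have hTY : T ≤ Y ^ (3/4 : ℝ) := by
    have h34 : (1 : ℝ) / (4/3 : ℝ) = 3/4 := by norm_num
    rw [hAB, hA4', h34, hB43'] at hHolder
    calc T ≤ (∫ x in Ω, q x ^ 2 * d x) ^ ((1:ℝ)/4) * Y ^ (3/4 : ℝ) := hHolder
      _ ≤ 1 * Y ^ (3/4 : ℝ) := by
          refine mul_le_mul_of_nonneg_right ?_ (Real.rpow_nonneg hY0 _)
          simpa using hgrad
      _ = Y ^ (3/4 : ℝ) := one_mul _
  -- the Sobolev inequality applied to f
  have hRHS : (∫ x in Ω, Real.sqrt (gNormSq g f x) * d x) = α * T := by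
    rw [hT_def, ← integral_const_mul]
    refine integral_congr_ae (Filter.Eventually.of_forall fun x => ?_)
    show Real.sqrt (gNormSq g f x) * d x = α * (Real.exp (α * u x) * Real.sqrt (q x) * d x)
    rw [hsqf x]; ring
  have hΛα : Λ * α = 1/2 := by
    rw [hα_def]; field_simp
  have hchain : S ^ (3/4 : ℝ) ≤ (1/2) * Y ^ (3/4 : ℝ) := by
    have h := hSob f hf_test
    rw [hRHS] at h
    calc S ^ (3/4 : ℝ) ≤ Λ * (α * T) := h
      _ = (1/2) * T := by rw [← mul_assoc, hΛα]
      _ ≤ (1/2) * Y ^ (3/4 : ℝ) := by linarith [hTY]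
  have hSle : S ≤ (1/2 : ℝ) ^ (4/3 : ℝ) * Y := by
    have h1 : (S ^ (3/4:ℝ)) ^ (4/3:ℝ) ≤ ((1/2) * Y ^ (3/4:ℝ)) ^ (4/3:ℝ) :=
      Real.rpow_le_rpow (Real.rpow_nonneg hS0 _) hchain (by norm_num)
    have h2 : (S ^ (3/4:ℝ)) ^ (4/3:ℝ) = S := by
      rw [← Real.rpow_mul hS0]; norm_num
    have h3 : ((1/2) * Y ^ (3/4:ℝ)) ^ (4/3:ℝ) = (1/2:ℝ) ^ (4/3:ℝ) * Y := by
      rw [Real.mul_rpow (by norm_num) (Real.rpow_nonneg hY0 _), ← Real.rpow_mul hY0]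
      norm_num
    rw [h2, h3] at h1
    exact h1
  -- pointwise exponential bound
  have hpt : ∀ x, Real.exp (4 * α / 3 * u x) * d x ≤
      (2:ℝ) ^ (1/3 : ℝ) * (|f x| ^ (4/3 : ℝ) * d x + d x) := by
    intro x
    have h0 : Real.exp (4 * α / 3 * u x) = Real.exp (α * u x) ^ (4/3:ℝ) := by
      rw [Real.rpow_def_of_pos (Real.exp_pos _), Real.log_exp]
      congr 1; ring
    have h1 : Real.exp (α * u x) ≤ |f x| + 1 := by
      have := le_abs_self (Real.exp (α * u x) - 1)
      have hfx : |f x| = |Real.exp (α * u x) - 1| := by rw [hf_def]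
      linarith [hfx ▸ this]
    have h2 : Real.exp (α * u x) ^ (4/3:ℝ) ≤ (|f x| + 1) ^ (4/3:ℝ) :=
      Real.rpow_le_rpow (Real.exp_pos _).le h1 (by norm_num)
    have h3 : (|f x| + 1) ^ (4/3:ℝ) ≤ (2:ℝ) ^ (1/3:ℝ) * (|f x| ^ (4/3:ℝ) + 1) := by
      have := add_rpow_le_two_rpow (abs_nonneg (f x)) (zero_le_one) (by norm_num : (1:ℝ) ≤ 4/3)
      rw [Real.one_rpow] at this
      calc (|f x| + 1) ^ (4/3:ℝ) ≤ 2 ^ ((4:ℝ)/3 - 1) * (|f x| ^ (4/3:ℝ) + 1) := this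
        _ = (2:ℝ) ^ (1/3:ℝ) * (|f x| ^ (4/3:ℝ) + 1) := by norm_num
    have h4 : Real.exp (4 * α / 3 * u x) ≤ (2:ℝ) ^ (1/3:ℝ) * (|f x| ^ (4/3:ℝ) + 1) := by
      rw [h0]; exact h2.trans h3
    calc Real.exp (4 * α / 3 * u x) * d x
        ≤ ((2:ℝ) ^ (1/3:ℝ) * (|f x| ^ (4/3:ℝ) + 1)) * d x :=
          mul_le_mul_of_nonneg_right h4 (hd_nonneg x)
      _ = (2:ℝ) ^ (1/3:ℝ) * (|f x| ^ (4/3:ℝ) * d x + d x) := by ring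
  have hYle : Y ≤ (2:ℝ) ^ (1/3:ℝ) * (S + V) := by
    have hint : Integrable (fun x => (2:ℝ) ^ (1/3:ℝ) * (|f x| ^ (4/3:ℝ) * d x + d x))
        (volume.restrict Ω) := (IS.add hvol).const_mul _
    calc Y ≤ ∫ x in Ω, (2:ℝ) ^ (1/3:ℝ) * (|f x| ^ (4/3:ℝ) * d x + d x) :=
          integral_mono IY hint hpt
      _ = (2:ℝ) ^ (1/3:ℝ) * (S + V) := by
          rw [integral_const_mul, integral_add IS hvol]
  -- final arithmetic
  have c1 : (2:ℝ) ^ (1/3:ℝ) * (1/2 : ℝ) ^ (4/3:ℝ) = 1/2 := by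
    have e1 : (1:ℝ)/3 - 4/3 = -1 := by norm_num
    rw [show (1/2 : ℝ) = 2⁻¹ by norm_num, Real.inv_rpow (by norm_num : (0:ℝ) ≤ 2),
      ← div_eq_mul_inv, ← Real.rpow_sub (by norm_num : (0:ℝ) < 2), e1,
      Real.rpow_neg (by norm_num : (0:ℝ) ≤ 2), Real.rpow_one]
  have c2 : (2:ℝ) * (2:ℝ) ^ (1/3:ℝ) = (2:ℝ) ^ (4/3:ℝ) := by
    nth_rewrite 1 [show (2:ℝ) = (2:ℝ) ^ (1:ℝ) by rw [Real.rpow_one]]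
    rw [← Real.rpow_add (by norm_num : (0:ℝ) < 2)]
    norm_num
  have hfin : Y ≤ (2:ℝ) ^ (4/3:ℝ) * V := by
    have h1 : Y ≤ (2:ℝ)^(1/3:ℝ) * S + (2:ℝ)^(1/3:ℝ) * V := by linarith [hYle]
    have h2 : (2:ℝ)^(1/3:ℝ) * S ≤ (2:ℝ)^(1/3:ℝ) * ((1/2:ℝ)^(4/3:ℝ) * Y) :=
      mul_le_mul_of_nonneg_left hSle (Real.rpow_nonneg (by norm_num) _)
    have h3 : (2:ℝ)^(1/3:ℝ) * ((1/2:ℝ)^(4/3:ℝ) * Y) = (1/2) * Y := by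
      rw [← mul_assoc, c1]
    have h4 : Y ≤ (1/2) * Y + (2:ℝ)^(1/3:ℝ) * V := by linarith
    rw [← c2, mul_assoc]
    linarith
  exact hfin
end
end

section
/- Let γ_L > 0 and assume the regularity estimate: for every w ∈ C_c^∞(Ω), (∫_Ω |dw|_g⁴ dvol_g)^{1/4} ≤ γ_L (∫_Ω (Δ_g w)² dvol_g)^{1/2}. Let J₀ ∈ C^∞(Ω) with E₀ := ½ ∫_Ω J₀² dvol_g < ∞. Then every u ∈ C_c^∞(Ω) satisfying ½ ∫_Ω (J₀ − Δ_g u − |du|_g²)² dvol_g ≤ E₀ and (∫_Ω |du|_g⁴ dvol_g)^{1/4} ≤ 1/(4γ_L) satisfies the a priori estimates (∫_Ω |du|_g⁴ dvol_g)^{1/4} ≤ (16/3) γ_L √E₀ and (∫_Ω (Δ_g u)² dvol_g)^{1/2} ≤ (∫_Ω |du|_g⁴ dvol_g)^{1/2} + 2√2 · √E₀. -/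
open MeasureTheory

noncomputable section

/-! ### Auxiliary lemmas -/

lemma pd_contDiff {u : V4 → ℝ} (hu : ContDiff ℝ (⊤ : ℕ∞) u) (i : Fin 4) :
    ContDiff ℝ (⊤ : ℕ∞) (fun x => pd i u x) :=
  (hu.fderiv_right (m := (⊤ : ℕ∞)) (by simp)).clm_apply contDiff_const

lemma pd_zero {u : V4 → ℝ} {x : V4} (hx : x ∉ tsupport u) (i : Fin 4) : pd i u x = 0 := by
  have h : u =ᶠ[nhds x] 0 := notMem_tsupport_iff_eventuallyEq.mp hx
  have h0 : fderiv ℝ (0 : V4 → ℝ) x = 0 := fderiv_const_apply 0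
  unfold pd
  rw [h.fderiv_eq, h0]
  simp

lemma pd_zero_of_eventually {F : V4 → ℝ} {x : V4}
    (h : F =ᶠ[nhds x] (fun _ => (0:ℝ))) (i : Fin 4) : pd i F x = 0 := by
  unfold pd
  rw [h.fderiv_eq, fderiv_const_apply 0]
  simp

lemma continuous_of_patch {f : V4 → ℝ} {Ω K : Set V4} (hΩ : IsOpen Ω) (hK : IsClosed K)
    (hKΩ : K ⊆ Ω) (h1 : ContinuousOn f Ω) (h0 : ∀ x ∉ K, f x = 0) : Continuous f := by
  rw [continuous_iff_continuousAt]
  intro x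
  by_cases hx : x ∈ Ω
  · exact h1.continuousAt (hΩ.mem_nhds hx)
  · have hxK : x ∉ K := fun h => hx (hKΩ h)
    have hev : f =ᶠ[nhds x] (fun _ => 0) :=
      Filter.eventually_of_mem (hK.isOpen_compl.mem_nhds hxK) (fun y hy => h0 y hy)
    exact (continuousAt_congr hev).mpr continuousAt_const

lemma contDiffOn_finset_prod {ι : Type*} {Ω : Set V4} (s : Finset ι) {f : ι → V4 → ℝ}
    (h : ∀ i ∈ s, ContDiffOn ℝ (⊤ : ℕ∞) (f i) Ω) :
    ContDiffOn ℝ (⊤ : ℕ∞) (fun x => ∏ i ∈ s, f i x) Ω := by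
  classical
  induction s using Finset.induction_on with
  | empty => simpa using contDiffOn_const
  | @insert a s ha ih =>
    simp only [Finset.prod_insert ha]
    exact (h a (Finset.mem_insert_self a s)).mul
      (ih fun i hi => h i (Finset.mem_insert_of_mem hi))

lemma contDiffOn_det {Ω : Set V4} {M : V4 → Matrix (Fin 4) (Fin 4) ℝ}
    (h : ∀ i j, ContDiffOn ℝ (⊤ : ℕ∞) (fun x => M x i j) Ω) :
    ContDiffOn ℝ (⊤ : ℕ∞) (fun x => (M x).det) Ω := by
  simp only [Matrix.det_apply']
  apply ContDiffOn.sum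
  intro σ _
  exact contDiffOn_const.mul (contDiffOn_finset_prod _ fun i _ => h (σ i) i)

lemma contDiffOn_adj {Ω : Set V4} {M : V4 → Matrix (Fin 4) (Fin 4) ℝ}
    (h : ∀ i j, ContDiffOn ℝ (⊤ : ℕ∞) (fun x => M x i j) Ω) (i j : Fin 4) :
    ContDiffOn ℝ (⊤ : ℕ∞) (fun x => (M x).adjugate i j) Ω := by
  simp only [Matrix.adjugate_apply]
  apply contDiffOn_det
  intro a b
  rcases eq_or_ne a j with hab | hab
  · simp only [hab, Matrix.updateRow_apply, if_pos rfl]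
    exact contDiffOn_const
  · simp only [Matrix.updateRow_apply, if_neg hab]
    exact h a b

lemma contDiffOn_inv_entry {Ω : Set V4} {M : V4 → Matrix (Fin 4) (Fin 4) ℝ}
    (h : ∀ i j, ContDiffOn ℝ (⊤ : ℕ∞) (fun x => M x i j) Ω)
    (hdet : ∀ x ∈ Ω, (M x).det ≠ 0) (i j : Fin 4) :
    ContDiffOn ℝ (⊤ : ℕ∞) (fun x => (M x)⁻¹ i j) Ω := by
  have he : ∀ x : V4, (M x)⁻¹ i j = ((M x).det)⁻¹ * (M x).adjugate i j := by
    intro x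
    rw [Matrix.inv_def]
    simp [Ring.inverse_eq_inv']
  simp only [he]
  exact ((contDiffOn_det h).inv hdet).mul (contDiffOn_adj h i j)

section MetricFacts
variable {Ω : Set V4} {g : V4 → Matrix (Fin 4) (Fin 4) ℝ}

lemma det_ne (hg : IsMetric Ω g) (x : V4) (hx : x ∈ Ω) : (g x).det ≠ 0 :=
  ((hg.posDef x hx).det_pos).ne'

lemma contDiffOn_sqrtDet (hg : IsMetric Ω g) : ContDiffOn ℝ (⊤ : ℕ∞) (fun x => sqrtDet g x) Ω :=
  (contDiffOn_det hg.smooth).sqrt (det_ne hg)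

lemma sqrtDet_pos (hg : IsMetric Ω g) (x : V4) (hx : x ∈ Ω) : 0 < sqrtDet g x :=
  Real.sqrt_pos.mpr (hg.posDef x hx).det_pos

lemma gNormSq_contOn (hg : IsMetric Ω g) {u : V4 → ℝ} (hu : ContDiff ℝ (⊤ : ℕ∞) u) :
    ContinuousOn (gNormSq g u) Ω := by
  unfold gNormSq gInner
  apply continuousOn_finset_sum
  intro i _
  apply continuousOn_finset_sum
  intro j _
  exact (((contDiffOn_inv_entry hg.smooth (det_ne hg) i j).continuousOn.mul
    (pd_contDiff hu i).continuous.continuousOn).mul (pd_contDiff hu j).continuous.continuousOn)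

lemma lap_contOn (hg : IsMetric Ω g) {u : V4 → ℝ} (hu : ContDiff ℝ (⊤ : ℕ∞) u) :
    ContinuousOn (lap g u) Ω := by
  have hF : ∀ i : Fin 4,
      ContDiffOn ℝ (⊤ : ℕ∞) (fun y => sqrtDet g y * ∑ j, (g y)⁻¹ i j * pd j u y) Ω := by
    intro i
    apply (contDiffOn_sqrtDet hg).mul
    apply ContDiffOn.sum
    intro j _
    exact (contDiffOn_inv_entry hg.smooth (det_ne hg) i j).mul (pd_contDiff hu j).contDiffOn
  unfold lap
  apply ContinuousOn.mul
  · exact ((contDiffOn_sqrtDet hg).continuousOn).inv₀ fun x hx => (sqrtDet_pos hg x hx).ne'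
  · apply continuousOn_finset_sum
    intro i _
    exact ((hF i).continuousOn_fderiv_of_isOpen hg.isOpen (by simp)).clm_apply continuousOn_const

lemma gNormSq_zero {u : V4 → ℝ} {x : V4} (hx : x ∉ tsupport u) : gNormSq g u x = 0 := by
  unfold gNormSq gInner
  simp [pd_zero hx]

lemma lap_zero {u : V4 → ℝ} {x : V4} (hx : x ∉ tsupport u) : lap g u x = 0 := by
  unfold lap
  have hz : ∀ i : Fin 4,
      pd i (fun y => sqrtDet g y * ∑ j, (g y)⁻¹ i j * pd j u y) x = 0 := by
    intro i
    have hmem : (tsupport u)ᶜ ∈ nhds x :=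
      (isClosed_tsupport u).isOpen_compl.mem_nhds hx
    exact pd_zero_of_eventually
      (Filter.eventually_of_mem hmem (fun y hy => by simp [pd_zero hy])) i
  simp [hz]

end MetricFacts

lemma l2_triangle {α : Type*} [MeasurableSpace α] {μ : Measure α} {f h : α → ℝ}
    (hf : MemLp f 2 μ) (hh : MemLp h 2 μ) :
    (∫ x, (f x + h x) ^ 2 ∂μ) ^ ((1:ℝ) / 2) ≤
      (∫ x, f x ^ 2 ∂μ) ^ ((1:ℝ) / 2) + (∫ x, h x ^ 2 ∂μ) ^ ((1:ℝ) / 2) := by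
  have key : ∀ {v : α → ℝ}, MemLp v 2 μ →
      eLpNorm v 2 μ = ENNReal.ofReal ((∫ x, v x ^ 2 ∂μ) ^ ((1:ℝ) / 2)) := by
    intro v hv
    rw [hv.eLpNorm_eq_integral_rpow_norm two_ne_zero ENNReal.ofNat_ne_top]
    congr 1
    have : ∀ x : α, ‖v x‖ ^ (ENNReal.toReal 2) = v x ^ 2 := by
      intro x
      rw [ENNReal.toReal_ofNat]
      rw [show ((2:ℝ)) = ((2:ℕ):ℝ) by norm_num, Real.rpow_natCast]
      rw [Real.norm_eq_abs, sq_abs]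
    simp_rw [this]
    norm_num
  have hfh : MemLp (f + h) 2 μ := hf.add hh
  have tri := eLpNorm_add_le hf.aestronglyMeasurable hh.aestronglyMeasurable one_le_two
  rw [key hfh, key hf, key hh] at tri
  have h1 : (0:ℝ) ≤ (∫ x, f x ^ 2 ∂μ) ^ ((1:ℝ) / 2) :=
    Real.rpow_nonneg (integral_nonneg fun x => sq_nonneg _) _
  have h2 : (0:ℝ) ≤ (∫ x, h x ^ 2 ∂μ) ^ ((1:ℝ) / 2) :=
    Real.rpow_nonneg (integral_nonneg fun x => sq_nonneg _) _
  rw [← ENNReal.ofReal_add h1 h2] at tri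
  have := (ENNReal.ofReal_le_ofReal_iff (add_nonneg h1 h2)).mp tri
  simpa [Pi.add_apply] using this

lemma arith_main {A γ S : ℝ} (hA : 0 ≤ A) (hγ : 0 < γ) (hS : 0 ≤ S)
    (hsm : A * (4 * γ) ≤ 1) (h : A ≤ γ * (A ^ 2 + 2 * Real.sqrt 2 * S)) :
    A ≤ 16 / 3 * γ * S := by
  have hs2 : Real.sqrt 2 ≤ 2 := by
    nlinarith [Real.sq_sqrt (show (0:ℝ) ≤ 2 by norm_num), Real.sqrt_nonneg 2]
  have hquad : γ * A ^ 2 ≤ A / 4 := by nlinarith [mul_le_mul_of_nonneg_left hsm hA]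
  have h2 : A ≤ A / 4 + γ * (2 * Real.sqrt 2 * S) := by nlinarith
  have h3 : (0:ℝ) ≤ (2 - Real.sqrt 2) * γ * S :=
    mul_nonneg (mul_nonneg (by linarith) hγ.le) hS
  nlinarith

/-- A priori estimates on `du` and `Δ_g u` for functions whose conformal
energy `½∫(J₀ − Δ_g u − |du|_g²)² dvol_g` does not exceed `E₀ = ½∫J₀² dvol_g`, under the
regularity estimate with constant `γ_L`. -/
theorem apriori_estimates_energy
    (Ω : Set V4) (g : V4 → Matrix (Fin 4) (Fin 4) ℝ) (hg : IsMetric Ω g)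
    (γL : ℝ) (hγL : 0 < γL)
    (hreg : ∀ w : V4 → ℝ, IsTestFn Ω w →
      (∫ x in Ω, (gNormSq g w x) ^ 2 * sqrtDet g x) ^ (1 / 4 : ℝ) ≤
        γL * (∫ x in Ω, (lap g w x) ^ 2 * sqrtDet g x) ^ (1 / 2 : ℝ))
    (J₀ : V4 → ℝ) (hJ₀ : ContDiffOn ℝ (⊤ : ℕ∞) J₀ Ω)
    (hJ₀int : IntegrableOn (fun x => J₀ x ^ 2 * sqrtDet g x) Ω)
    (E₀ : ℝ) (hE₀ : E₀ = (1 / 2) * ∫ x in Ω, J₀ x ^ 2 * sqrtDet g x) :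
    ∀ u : V4 → ℝ, IsTestFn Ω u →
      (1 / 2) * (∫ x in Ω, (J₀ x - lap g u x - gNormSq g u x) ^ 2 * sqrtDet g x) ≤ E₀ →
      (∫ x in Ω, (gNormSq g u x) ^ 2 * sqrtDet g x) ^ (1 / 4 : ℝ) ≤ 1 / (4 * γL) →
      (∫ x in Ω, (gNormSq g u x) ^ 2 * sqrtDet g x) ^ (1 / 4 : ℝ) ≤
          (16 / 3) * γL * Real.sqrt E₀ ∧
        (∫ x in Ω, (lap g u x) ^ 2 * sqrtDet g x) ^ (1 / 2 : ℝ) ≤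
          (∫ x in Ω, (gNormSq g u x) ^ 2 * sqrtDet g x) ^ (1 / 2 : ℝ) +
            2 * Real.sqrt 2 * Real.sqrt E₀ := by
  intro u hu hEn hsmall
  have hΩmeas : MeasurableSet Ω := hg.isOpen.measurableSet
  have hKΩ : tsupport u ⊆ Ω := hu.support_subset
  set s : V4 → ℝ := fun x => Real.sqrt (sqrtDet g x) with hsdef
  have hs_sq : ∀ x, s x ^ 2 = sqrtDet g x := fun x => Real.sq_sqrt (Real.sqrt_nonneg _)
  have hs_contOn : ContinuousOn s Ω :=
    Real.continuous_sqrt.comp_continuousOn (contDiffOn_sqrtDet hg).continuousOn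
  -- the four L² functions
  set bs : V4 → ℝ := fun x => lap g u x * s x with hbs
  set cs : V4 → ℝ := fun x => gNormSq g u x * s x with hcs
  set as : V4 → ℝ := fun x => J₀ x * s x with has
  set es : V4 → ℝ := fun x => (J₀ x - lap g u x - gNormSq g u x) * s x with hes
  -- global continuity of bs, cs
  have hb_cont : Continuous bs :=
    continuous_of_patch hg.isOpen (isClosed_tsupport u) hKΩ
      ((lap_contOn hg hu.smooth).mul hs_contOn)
      (fun x hx => by simp [hbs, lap_zero hx])
  have hc_cont : Continuous cs :=
    continuous_of_patch hg.isOpen (isClosed_tsupport u) hKΩ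
      ((gNormSq_contOn hg hu.smooth).mul hs_contOn)
      (fun x hx => by simp [hcs, gNormSq_zero hx])
  -- integrability of squares
  have hb2 : ∀ x, bs x ^ 2 = (lap g u x) ^ 2 * sqrtDet g x := fun x => by
    rw [hbs]; rw [mul_pow, hs_sq]
  have hc2 : ∀ x, cs x ^ 2 = (gNormSq g u x) ^ 2 * sqrtDet g x := fun x => by
    rw [hcs]; rw [mul_pow, hs_sq]
  have ha2 : ∀ x, as x ^ 2 = J₀ x ^ 2 * sqrtDet g x := fun x => by
    rw [has]; rw [mul_pow, hs_sq]
  have he2 : ∀ x, es x ^ 2 = (J₀ x - lap g u x - gNormSq g u x) ^ 2 * sqrtDet g x := fun x => by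
    rw [hes]; rw [mul_pow, hs_sq]
  have hb_sq_int : Integrable (fun x => bs x ^ 2) :=
    (hb_cont.pow 2).integrable_of_hasCompactSupport
      (HasCompactSupport.intro hu.compactSupport
        (fun x hx => by simp [hbs, lap_zero hx]))
  have hc_sq_int : Integrable (fun x => cs x ^ 2) :=
    (hc_cont.pow 2).integrable_of_hasCompactSupport
      (HasCompactSupport.intro hu.compactSupport
        (fun x hx => by simp [hcs, gNormSq_zero hx]))
  -- Memℒp facts over μ := volume.restrict Ω
  have hbL2 : MemLp bs 2 (volume.restrict Ω) :=
    (memLp_two_iff_integrable_sq (hb_cont.aestronglyMeasurable.restrict)).mpr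
      hb_sq_int.restrict
  have hcL2 : MemLp cs 2 (volume.restrict Ω) :=
    (memLp_two_iff_integrable_sq (hc_cont.aestronglyMeasurable.restrict)).mpr
      hc_sq_int.restrict
  have ha_meas : AEStronglyMeasurable as (volume.restrict Ω) :=
    ((hJ₀.continuousOn.mul hs_contOn)).aestronglyMeasurable hΩmeas
  have haL2 : MemLp as 2 (volume.restrict Ω) := by
    refine (memLp_two_iff_integrable_sq ha_meas).mpr ?_
    have : (fun x => as x ^ 2) = fun x => J₀ x ^ 2 * sqrtDet g x := funext ha2
    rw [this]
    exact hJ₀int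
  have heL2 : MemLp es 2 (volume.restrict Ω) := by
    have hdecomp : es = fun x => as x + (-(bs x) + -(cs x)) := by
      funext x
      simp only [hes, has, hbs, hcs]
      ring
    rw [hdecomp]
    exact haL2.add (hbL2.neg.add hcL2.neg)
  -- nonnegativity of the relevant integrals
  have hIq_nonneg : (0:ℝ) ≤ ∫ x in Ω, (gNormSq g u x) ^ 2 * sqrtDet g x :=
    setIntegral_nonneg hΩmeas fun x _ => mul_nonneg (sq_nonneg _) (Real.sqrt_nonneg _)
  have hIb_nonneg : (0:ℝ) ≤ ∫ x in Ω, (lap g u x) ^ 2 * sqrtDet g x :=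
    setIntegral_nonneg hΩmeas fun x _ => mul_nonneg (sq_nonneg _) (Real.sqrt_nonneg _)
  have hIe_nonneg : (0:ℝ) ≤ ∫ x in Ω, (J₀ x - lap g u x - gNormSq g u x) ^ 2 * sqrtDet g x :=
    setIntegral_nonneg hΩmeas fun x _ => mul_nonneg (sq_nonneg _) (Real.sqrt_nonneg _)
  have hE₀_nonneg : (0:ℝ) ≤ E₀ := le_trans (by linarith) hEn
  -- Minkowski I:  ‖bs‖ ≤ ‖bs+cs‖ + ‖cs‖
  have T1 := l2_triangle (f := fun x => bs x + cs x) (h := fun x => -cs x)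
    (hbL2.add hcL2) hcL2.neg
  have e1 : ∀ x : V4, ((fun x => bs x + cs x) x + (fun x => -cs x) x) ^ 2 = bs x ^ 2 :=
    fun x => by ring
  have e2 : ∀ x : V4, ((fun x => -cs x) x) ^ 2 = cs x ^ 2 := fun x => by ring
  simp_rw [e1, e2] at T1
  -- Minkowski II:  ‖bs+cs‖ ≤ ‖as‖ + ‖es‖
  have T2 := l2_triangle (f := as) (h := fun x => -es x) haL2 heL2.neg
  have e3 : ∀ x : V4, (as x + (fun x => -es x) x) ^ 2 = ((fun x => bs x + cs x) x) ^ 2 := by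
    intro x
    simp only [has, hbs, hcs, hes]
    ring
  have e4 : ∀ x : V4, ((fun x => -es x) x) ^ 2 = es x ^ 2 := fun x => by ring
  simp_rw [e3, e4] at T2
  -- rewrite the integrals of squares in terms of the statement's integrands
  have rb : (∫ x in Ω, bs x ^ 2) = ∫ x in Ω, (lap g u x) ^ 2 * sqrtDet g x := by
    simp_rw [hb2]
  have rc : (∫ x in Ω, cs x ^ 2) = ∫ x in Ω, (gNormSq g u x) ^ 2 * sqrtDet g x := by
    simp_rw [hc2]
  have ra : (∫ x in Ω, as x ^ 2) = ∫ x in Ω, J₀ x ^ 2 * sqrtDet g x := by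
    simp_rw [ha2]
  have re : (∫ x in Ω, es x ^ 2) =
      ∫ x in Ω, (J₀ x - lap g u x - gNormSq g u x) ^ 2 * sqrtDet g x := by
    simp_rw [he2]
  rw [rb, rc] at T1
  rw [ra, re] at T2
  -- bound the middle term
  have hIa : (∫ x in Ω, J₀ x ^ 2 * sqrtDet g x) = 2 * E₀ := by linarith
  have hIe_le : (∫ x in Ω, (J₀ x - lap g u x - gNormSq g u x) ^ 2 * sqrtDet g x) ≤ 2 * E₀ := by
    linarith
  have hsqrt2E : ((2:ℝ) * E₀) ^ ((1:ℝ)/2) = Real.sqrt 2 * Real.sqrt E₀ := by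
    rw [← Real.sqrt_eq_rpow, Real.sqrt_mul (by norm_num : (0:ℝ) ≤ 2)]
  have hmid : (∫ x in Ω, ((fun x => bs x + cs x) x) ^ 2) ^ ((1:ℝ)/2) ≤
      2 * (Real.sqrt 2 * Real.sqrt E₀) := by
    have h1 : (∫ x in Ω, J₀ x ^ 2 * sqrtDet g x) ^ ((1:ℝ)/2) =
        Real.sqrt 2 * Real.sqrt E₀ := by rw [hIa, hsqrt2E]
    have h2 : (∫ x in Ω, (J₀ x - lap g u x - gNormSq g u x) ^ 2 * sqrtDet g x) ^ ((1:ℝ)/2) ≤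
        Real.sqrt 2 * Real.sqrt E₀ := by
      rw [← hsqrt2E]
      exact Real.rpow_le_rpow hIe_nonneg hIe_le (by norm_num)
    calc (∫ x in Ω, ((fun x => bs x + cs x) x) ^ 2) ^ ((1:ℝ)/2) ≤ _ := T2
    _ ≤ 2 * (Real.sqrt 2 * Real.sqrt E₀) := by rw [h1]; linarith
  -- second estimate
  have hBineq : (∫ x in Ω, (lap g u x) ^ 2 * sqrtDet g x) ^ ((1:ℝ)/2) ≤
      (∫ x in Ω, (gNormSq g u x) ^ 2 * sqrtDet g x) ^ ((1:ℝ)/2) +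
        2 * Real.sqrt 2 * Real.sqrt E₀ := by
    calc (∫ x in Ω, (lap g u x) ^ 2 * sqrtDet g x) ^ ((1:ℝ)/2) ≤ _ := T1
    _ ≤ _ := by
        have := hmid
        linarith
  refine ⟨?_, by norm_num at hBineq ⊢; linarith [hBineq]⟩
  -- first estimate
  set A := (∫ x in Ω, (gNormSq g u x) ^ 2 * sqrtDet g x) ^ ((1:ℝ)/4) with hA
  have hA_nonneg : 0 ≤ A := Real.rpow_nonneg hIq_nonneg _
  have hA2 : A ^ 2 = (∫ x in Ω, (gNormSq g u x) ^ 2 * sqrtDet g x) ^ ((1:ℝ)/2) := by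
    rw [hA, ← Real.rpow_natCast (_ ^ ((1:ℝ)/4)) 2, ← Real.rpow_mul hIq_nonneg]
    norm_num
  have hregu : A ≤ γL * ((∫ x in Ω, (lap g u x) ^ 2 * sqrtDet g x) ^ ((1:ℝ)/2)) :=
    hreg u hu
  have hAle : A ≤ γL * (A ^ 2 + 2 * Real.sqrt 2 * Real.sqrt E₀) := by
    rw [hA2]
    exact le_trans hregu (mul_le_mul_of_nonneg_left hBineq hγL.le)
  have hsmall' : A * (4 * γL) ≤ 1 := by
    have h4 : (0:ℝ) < 4 * γL := by linarith
    have h5 := mul_le_mul_of_nonneg_right hsmall h4.le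
    rwa [one_div, inv_mul_cancel₀ h4.ne'] at h5
  exact arith_main hA_nonneg hγL (Real.sqrt_nonneg E₀) hsmall' hAle
end
end

section
/- Let J₀ ∈ C^∞(Ω) and u ∈ C^∞(Ω). Assume u is a critical point of the functional E(w) := ½ ∫_Ω (J₀ − Δ_g w − |dw|_g²)² dvol_g in the sense that its first variation vanishes: for every v ∈ C_c^∞(Ω), ∫_Ω (J₀ − Δ_g u − |du|_g²)(Δ_g v + 2⟨du,dv⟩_g) dvol_g = 0. Then the function J_u := e^{−2u}(J₀ − Δ_g u − |du|_g²) is weakly harmonic for the conformal metric e^{2u} g: for every φ ∈ C_c^∞(Ω), ∫_Ω e^{2u} ⟨dJ_u, dφ⟩_g dvol_g = 0. -/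
open MeasureTheory

noncomputable section

namespace EL

variable {Ω : Set V4} {g : V4 → Matrix (Fin 4) (Fin 4) ℝ} {x : V4}

/-! ### basic `pd` lemmas -/

lemma pd_congr_zero {f : V4 → ℝ} (hf : ∀ᶠ y in nhds x, f y = 0) (i : Fin 4) :
    pd i f x = 0 := by
  have h : f =ᶠ[nhds x] (fun _ => (0:ℝ)) := hf
  unfold pd
  rw [h.fderiv_eq]
  simp

lemma pd_mul {a b : V4 → ℝ} (ha : DifferentiableAt ℝ a x)
    (hb : DifferentiableAt ℝ b x) (i : Fin 4) :
    pd i (fun y => a y * b y) x = pd i a x * b x + a x * pd i b x := by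
  unfold pd
  rw [fderiv_fun_mul ha hb]
  simp [smul_eq_mul]
  ring

lemma pd_exp_comp {a : V4 → ℝ} (ha : DifferentiableAt ℝ a x) (i : Fin 4) :
    pd i (fun y => Real.exp (a y)) x = Real.exp (a x) * pd i a x := by
  unfold pd
  rw [fderiv_exp ha]
  simp [smul_eq_mul]

/-! ### smoothness lemmas -/

lemma cda_finset_prod {ι : Type*} {s : Finset ι} {f : ι → V4 → ℝ}
    (h : ∀ i ∈ s, ContDiffAt ℝ (⊤ : ℕ∞) (f i) x) :
    ContDiffAt ℝ (⊤ : ℕ∞) (fun y => ∏ i ∈ s, f i y) x := by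
  classical
  induction' s using Finset.induction_on with i s hi ih
  · simpa using contDiffAt_const
  · simp only [Finset.prod_insert hi]
    exact (h i (Finset.mem_insert_self i s)).mul
      (ih fun j hj => h j (Finset.mem_insert_of_mem hj))

lemma cda_det {M : V4 → Matrix (Fin 4) (Fin 4) ℝ}
    (h : ∀ i j, ContDiffAt ℝ (⊤ : ℕ∞) (fun y => M y i j) x) :
    ContDiffAt ℝ (⊤ : ℕ∞) (fun y => (M y).det) x := by
  simp only [Matrix.det_apply']
  exact ContDiffAt.sum fun σ _ =>
    contDiffAt_const.mul (cda_finset_prod fun i _ => h (σ i) i)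

lemma cda_pd {f : V4 → ℝ} (hf : ContDiffAt ℝ (⊤ : ℕ∞) f x) (i : Fin 4) :
    ContDiffAt ℝ (⊤ : ℕ∞) (pd i f) x :=
  (hf.fderiv_right (by simp)).clm_apply contDiffAt_const

variable (hent : ∀ i j, ContDiffAt ℝ (⊤ : ℕ∞) (fun y => g y i j) x)
  (hpos : (g x).PosDef)

include hent hpos

lemma cda_inv_entry (i j : Fin 4) :
    ContDiffAt ℝ (⊤ : ℕ∞) (fun y => (g y)⁻¹ i j) x := by
  have hdet : ContDiffAt ℝ (⊤ : ℕ∞) (fun y => (g y).det) x := cda_det hent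
  have hadj : ContDiffAt ℝ (⊤ : ℕ∞) (fun y => (g y).adjugate i j) x := by
    simp only [Matrix.adjugate_apply]
    apply cda_det
    intro k l
    rcases eq_or_ne k j with rfl | hk
    · simp only [Matrix.updateRow_self]
      exact contDiffAt_const
    · simp only [Matrix.updateRow_ne hk]
      exact hent k l
  have e : (fun y => (g y)⁻¹ i j) = fun y => ((g y).det)⁻¹ * (g y).adjugate i j := by
    ext y
    rw [Matrix.inv_def, Matrix.smul_apply, Ring.inverse_eq_inv', smul_eq_mul]
  rw [e]
  exact (hdet.inv hpos.det_pos.ne').mul hadj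

lemma cda_sqrtDet : ContDiffAt ℝ (⊤ : ℕ∞) (sqrtDet g) x :=
  (Real.contDiffAt_sqrt hpos.det_pos.ne').comp x (cda_det hent)

omit hent in
lemma sqrtDet_pos : 0 < sqrtDet g x := Real.sqrt_pos.2 hpos.det_pos

lemma cda_gInner {a b : V4 → ℝ} (ha : ContDiffAt ℝ (⊤ : ℕ∞) a x) (hb : ContDiffAt ℝ (⊤ : ℕ∞) b x) :
    ContDiffAt ℝ (⊤ : ℕ∞) (gInner g a b) x := by
  unfold gInner
  exact ContDiffAt.sum fun i _ => ContDiffAt.sum fun j _ =>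
    ((cda_inv_entry hent hpos i j).mul (cda_pd ha i)).mul (cda_pd hb j)

lemma cda_hh {f : V4 → ℝ} (hf : ContDiffAt ℝ (⊤ : ℕ∞) f x) (i : Fin 4) :
    ContDiffAt ℝ (⊤ : ℕ∞) (fun y => sqrtDet g y * ∑ j, (g y)⁻¹ i j * pd j f y) x :=
  (cda_sqrtDet hent hpos).mul <| ContDiffAt.sum fun j _ =>
    (cda_inv_entry hent hpos i j).mul (cda_pd hf j)

lemma cda_lap {f : V4 → ℝ} (hf : ContDiffAt ℝ (⊤ : ℕ∞) f x) :
    ContDiffAt ℝ (⊤ : ℕ∞) (lap g f) x := by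
  unfold lap
  exact ((cda_sqrtDet hent hpos).inv (sqrtDet_pos hpos).ne').mul <|
    ContDiffAt.sum fun i _ => cda_pd (cda_hh hent hpos hf i) i

omit hent hpos

/-! ### the auxiliary functions -/

variable (g) in
/-- `α = J₀ - Δ_g u - |du|²_g`. -/
def alpha (J₀ u : V4 → ℝ) : V4 → ℝ := fun y => J₀ y - lap g u y - gNormSq g u y

variable (g) in
/-- `h_i = √(det g) Σ_j g^{ij} ∂_j φ`. -/
def hh (φ : V4 → ℝ) (i : Fin 4) : V4 → ℝ :=
  fun y => sqrtDet g y * ∑ j, (g y)⁻¹ i j * pd j φ y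

variable (g) in
/-- `F_i = α · h_i`, the vector field whose divergence we integrate. -/
def FF (J₀ u φ : V4 → ℝ) (i : Fin 4) : V4 → ℝ :=
  fun y => alpha g J₀ u y * hh g φ i y

variable {J₀ u φ : V4 → ℝ}

section metric

variable (hg : IsMetric Ω g) (hJ₀ : ContDiffOn ℝ (⊤ : ℕ∞) J₀ Ω) (hu : ContDiffOn ℝ (⊤ : ℕ∞) u Ω)
  (hφ : IsTestFn Ω φ) (hx : x ∈ Ω)

include hg hx

lemma hent' : ∀ i j, ContDiffAt ℝ (⊤ : ℕ∞) (fun y => g y i j) x :=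
  fun i j => (hg.smooth i j).contDiffAt (hg.isOpen.mem_nhds hx)

lemma hpos' : (g x).PosDef := hg.posDef x hx

include hJ₀ hu in
lemma cda_alpha : ContDiffAt ℝ (⊤ : ℕ∞) (alpha g J₀ u) x := by
  have hu' := hu.contDiffAt (hg.isOpen.mem_nhds hx)
  exact ((hJ₀.contDiffAt (hg.isOpen.mem_nhds hx)).sub
      (cda_lap (hent' hg hx) (hpos' hg hx) hu')).sub
    (cda_gInner (hent' hg hx) (hpos' hg hx) hu' hu')

include hJ₀ hu hφ in
lemma cda_FF (i : Fin 4) : ContDiffAt ℝ (⊤ : ℕ∞) (FF g J₀ u φ i) x :=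
  (cda_alpha hg hJ₀ hu hx).mul
    (cda_hh (hent' hg hx) (hpos' hg hx) hφ.smooth.contDiffAt i)

end metric

/-! ### vanishing off the support of φ -/

lemma pd_phi_zero (hx : x ∉ tsupport φ) (j : Fin 4) : pd j φ x = 0 := by
  refine pd_congr_zero ?_ j
  filter_upwards [(isClosed_tsupport φ).isOpen_compl.mem_nhds hx] with y hy
  exact image_eq_zero_of_notMem_tsupport hy

lemma hh_zero (hx : x ∉ tsupport φ) (i : Fin 4) : hh g φ i x = 0 := by
  unfold hh
  simp [pd_phi_zero hx]

lemma FF_zero (hx : x ∉ tsupport φ) (i : Fin 4) : FF g J₀ u φ i x = 0 := by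
  unfold FF
  simp [hh_zero hx]

lemma FF_ev_zero (hx : x ∉ tsupport φ) (i : Fin 4) :
    ∀ᶠ y in nhds x, FF g J₀ u φ i y = 0 := by
  filter_upwards [(isClosed_tsupport φ).isOpen_compl.mem_nhds hx] with y hy
  exact FF_zero hy i

lemma pd_FF_zero (hx : x ∉ tsupport φ) (i j : Fin 4) : pd j (FF g J₀ u φ i) x = 0 :=
  pd_congr_zero (FF_ev_zero hx i) j

lemma gInner_right_zero (hx : x ∉ tsupport φ) (a : V4 → ℝ) : gInner g a φ x = 0 := by
  unfold gInner
  simp [pd_phi_zero hx]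

lemma lap_phi_zero (hx : x ∉ tsupport φ) : lap g φ x = 0 := by
  unfold lap
  have h0 : ∀ i : Fin 4,
      pd i (fun y => sqrtDet g y * ∑ j, (g y)⁻¹ i j * pd j φ y) x = 0 := by
    intro i
    refine pd_congr_zero ?_ i
    filter_upwards [(isClosed_tsupport φ).isOpen_compl.mem_nhds hx] with y hy
    exact hh_zero hy i
  simp [h0]

/-! ### globalization -/

lemma continuous_of_vanish {f : V4 → ℝ} (hS : tsupport φ ⊆ Ω)
    (h1 : ∀ x ∈ Ω, ContinuousAt f x) (h2 : ∀ x ∉ tsupport φ, f x = 0) :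
    Continuous f := by
  rw [continuous_iff_continuousAt]
  intro x
  by_cases hx : x ∈ Ω
  · exact h1 x hx
  · have hx' : x ∉ tsupport φ := fun h => hx (hS h)
    have hev : f =ᶠ[nhds x] fun _ => (0:ℝ) := by
      filter_upwards [(isClosed_tsupport φ).isOpen_compl.mem_nhds hx'] with y hy
      exact h2 y hy
    exact hev.continuousAt

lemma integrable_of_vanish {f : V4 → ℝ} (hφc : HasCompactSupport φ)
    (hS : tsupport φ ⊆ Ω)
    (h1 : ∀ x ∈ Ω, ContinuousAt f x) (h2 : ∀ x ∉ tsupport φ, f x = 0) :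
    Integrable f := by
  refine (continuous_of_vanish hS h1 h2).integrable_of_hasCompactSupport ?_
  exact HasCompactSupport.intro hφc h2

lemma differentiable_of_vanish {f : V4 → ℝ} (hS : tsupport φ ⊆ Ω)
    (h1 : ∀ x ∈ Ω, ContDiffAt ℝ (⊤ : ℕ∞) f x) (h2 : ∀ x ∉ tsupport φ, f x = 0) :
    Differentiable ℝ f := by
  intro x
  by_cases hx : x ∈ Ω
  · exact (h1 x hx).differentiableAt (by simp)
  · have hx' : x ∉ tsupport φ := fun h => hx (hS h)
    have hev : f =ᶠ[nhds x] fun _ => (0:ℝ) := by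
      filter_upwards [(isClosed_tsupport φ).isOpen_compl.mem_nhds hx'] with y hy
      exact h2 y hy
    exact (differentiableAt_const (0:ℝ)).congr_of_eventuallyEq hev

/-- divergence-type vanishing of the integral of a single partial derivative. -/
lemma integral_pd_eq_zero {f : V4 → ℝ} (i : Fin 4)
    (hdiff : Differentiable ℝ f) (hfi : Integrable f)
    (hfi' : Integrable (pd i f)) :
    ∫ x, pd i f x = 0 := by
  have h := integral_mul_fderiv_eq_neg_fderiv_mul_of_integrable (μ := volume)
    (f := fun _ : V4 => (1:ℝ)) (g := f) (v := Pi.single i 1)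
    ?_ ?_ ?_ (fun x _ => differentiableAt_const _) (fun x _ => hdiff x)
  · simpa [pd] using h
  · refine (integrable_zero _ _ _).congr (Filter.Eventually.of_forall fun x => ?_)
    simp
  · exact hfi'.congr (Filter.Eventually.of_forall fun x => by simp [pd])
  · exact hfi.congr (Filter.Eventually.of_forall fun x => by simp)

/-! ### the pointwise identities -/

lemma sum_pd_FF_eq (hne : sqrtDet g x ≠ 0)
    (ha : DifferentiableAt ℝ (alpha g J₀ u) x)
    (hhd : ∀ i, DifferentiableAt ℝ (hh g φ i) x) :
    ∑ i, pd i (FF g J₀ u φ i) x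
      = (gInner g (alpha g J₀ u) φ x + alpha g J₀ u x * lap g φ x) * sqrtDet g x := by
  have e1 : ∀ i : Fin 4, pd i (FF g J₀ u φ i) x
      = pd i (alpha g J₀ u) x * hh g φ i x + alpha g J₀ u x * pd i (hh g φ i) x := by
    intro i
    have := pd_mul ha (hhd i) i
    exact this
  rw [Finset.sum_congr rfl fun i _ => e1 i, Finset.sum_add_distrib, ← Finset.mul_sum]
  have A : ∑ i, pd i (alpha g J₀ u) x * hh g φ i x
      = gInner g (alpha g J₀ u) φ x * sqrtDet g x := by
    unfold hh gInner
    simp only [Finset.mul_sum, Finset.sum_mul]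
    exact Finset.sum_congr rfl fun i _ => Finset.sum_congr rfl fun j _ => by ring
  have B : ∑ i, pd i (hh g φ i) x = sqrtDet g x * lap g φ x := by
    unfold lap hh
    rw [← mul_assoc, mul_inv_cancel₀ hne, one_mul]
  rw [A, B]
  ring

lemma target_eq (hud : DifferentiableAt ℝ u x)
    (ha : DifferentiableAt ℝ (alpha g J₀ u) x) :
    Real.exp (2 * u x) *
        gInner g (fun y => Real.exp (-2 * u y) * alpha g J₀ u y) φ x * sqrtDet g x
      = (gInner g (alpha g J₀ u) φ x - 2 * alpha g J₀ u x * gInner g u φ x) * sqrtDet g x := by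
  have hexp : DifferentiableAt ℝ (fun y => Real.exp (-2 * u y)) x :=
    (hud.const_mul (-2 : ℝ)).exp
  have hpd : ∀ i : Fin 4, pd i (fun y => Real.exp (-2 * u y) * alpha g J₀ u y) x
      = Real.exp (-2 * u x) * (pd i (alpha g J₀ u) x + -2 * pd i u x * alpha g J₀ u x) := by
    intro i
    rw [pd_mul hexp ha i, pd_exp_comp (hud.const_mul (-2 : ℝ)) i]
    have h2 : pd i (fun y => (-2 : ℝ) * u y) x = -2 * pd i u x := by
      unfold pd
      rw [fderiv_const_mul hud]
      simp
    rw [h2]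
    ring
  have hG : gInner g (fun y => Real.exp (-2 * u y) * alpha g J₀ u y) φ x
      = Real.exp (-2 * u x) * gInner g (alpha g J₀ u) φ x
        - (2 * alpha g J₀ u x * Real.exp (-2 * u x)) * gInner g u φ x := by
    unfold gInner
    have step : ∀ i : Fin 4, ∀ j : Fin 4,
        (g x)⁻¹ i j * pd i (fun y => Real.exp (-2 * u y) * alpha g J₀ u y) x * pd j φ x
        = Real.exp (-2 * u x) * ((g x)⁻¹ i j * pd i (alpha g J₀ u) x * pd j φ x)
          - (2 * alpha g J₀ u x * Real.exp (-2 * u x)) *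
              ((g x)⁻¹ i j * pd i u x * pd j φ x) := by
      intro i j
      rw [hpd i]
      ring
    rw [Finset.sum_congr rfl fun i _ => Finset.sum_congr rfl fun j _ => step i j]
    simp only [Finset.sum_sub_distrib, ← Finset.mul_sum]
  rw [hG]
  have hE : Real.exp (2 * u x) * Real.exp (-2 * u x) = 1 := by
    rw [← Real.exp_add]
    norm_num
  linear_combination ((gInner g (alpha g J₀ u) φ x
      - 2 * alpha g J₀ u x * gInner g u φ x) * sqrtDet g x) * hE

end EL

/-- If `u` is a critical point of the conformal energy
`E(w) = ½∫(J₀ − Δ_g w − |dw|_g²)² dvol_g`, then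
`J_u = e^{−2u}(J₀ − Δ_g u − |du|_g²)` is weakly harmonic for the conformal
metric `e^{2u} g`. -/
theorem euler_lagrange_J_harmonic
    (Ω : Set V4) (g : V4 → Matrix (Fin 4) (Fin 4) ℝ) (hg : IsMetric Ω g)
    (J₀ : V4 → ℝ) (hJ₀ : ContDiffOn ℝ (⊤ : ℕ∞) J₀ Ω)
    (u : V4 → ℝ) (hu : ContDiffOn ℝ (⊤ : ℕ∞) u Ω)
    (hcrit : ∀ v : V4 → ℝ, IsTestFn Ω v →
      ∫ x in Ω, (J₀ x - lap g u x - gNormSq g u x) *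
        (lap g v x + 2 * gInner g u v x) * sqrtDet g x = 0) :
    ∀ φ : V4 → ℝ, IsTestFn Ω φ →
      ∫ x in Ω, Real.exp (2 * u x) *
        gInner g (fun y => Real.exp (-2 * u y) * (J₀ y - lap g u y - gNormSq g u y)) φ x *
        sqrtDet g x = 0 := by
  intro φ hφ
  have hSΩ : tsupport φ ⊆ Ω := hφ.support_subset
  -- abbreviations
  set α := EL.alpha g J₀ u with hα
  -- integrals of divergences vanish
  have hFFdiff : ∀ i, Differentiable ℝ (EL.FF g J₀ u φ i) := fun i =>
    EL.differentiable_of_vanish hSΩ (fun x hx => EL.cda_FF hg hJ₀ hu hφ hx i)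
      (fun x hx => EL.FF_zero hx i)
  have hFFint : ∀ i, Integrable (EL.FF g J₀ u φ i) := fun i =>
    EL.integrable_of_vanish hφ.compactSupport hSΩ
      (fun x hx => (EL.cda_FF hg hJ₀ hu hφ hx i).continuousAt)
      (fun x hx => EL.FF_zero hx i)
  have hpdFFint : ∀ i, Integrable (pd i (EL.FF g J₀ u φ i)) := fun i =>
    EL.integrable_of_vanish hφ.compactSupport hSΩ
      (fun x hx => (EL.cda_pd (EL.cda_FF hg hJ₀ hu hφ hx i) i).continuousAt)
      (fun x hx => EL.pd_FF_zero hx i i)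
  have hint0 : ∀ i, ∫ x, pd i (EL.FF g J₀ u φ i) x = 0 := fun i =>
    EL.integral_pd_eq_zero i (hFFdiff i) (hFFint i) (hpdFFint i)
  have hsum : ∫ x, (∑ i, pd i (EL.FF g J₀ u φ i) x) = 0 := by
    rw [integral_finset_sum _ (fun i _ => hpdFFint i)]
    simp [hint0]
  have hXset : ∫ x in Ω, (∑ i, pd i (EL.FF g J₀ u φ i) x) = 0 := by
    rw [setIntegral_eq_integral_of_forall_compl_eq_zero
      (fun x hx => by
        have hx' : x ∉ tsupport φ := fun h => hx (hSΩ h)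
        simp [EL.pd_FF_zero hx'])]
    exact hsum
  -- the two integrable pieces
  set X' : V4 → ℝ := fun x => (gInner g α φ x + α x * lap g φ x) * sqrtDet g x with hX'
  set Z : V4 → ℝ := fun x => (J₀ x - lap g u x - gNormSq g u x) *
      (lap g φ x + 2 * gInner g u φ x) * sqrtDet g x with hZ
  have hX'cont : ∀ x ∈ Ω, ContinuousAt X' x := by
    intro x hx
    have hent := EL.hent' hg hx
    have hpos := EL.hpos' hg hx
    have hα' := EL.cda_alpha hg hJ₀ hu hx
    exact (((EL.cda_gInner hent hpos hα' hφ.smooth.contDiffAt).add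
      (hα'.mul (EL.cda_lap hent hpos hφ.smooth.contDiffAt))).mul
      (EL.cda_sqrtDet hent hpos)).continuousAt
  have hX'zero : ∀ x ∉ tsupport φ, X' x = 0 := by
    intro x hx
    simp [hX', EL.gInner_right_zero hx, EL.lap_phi_zero hx]
  have hX'int : Integrable X' :=
    EL.integrable_of_vanish hφ.compactSupport hSΩ hX'cont hX'zero
  have hZcont : ∀ x ∈ Ω, ContinuousAt Z x := by
    intro x hx
    have hent := EL.hent' hg hx
    have hpos := EL.hpos' hg hx
    have hα' := EL.cda_alpha hg hJ₀ hu hx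
    have hu' := hu.contDiffAt (hg.isOpen.mem_nhds hx)
    exact ((hα'.mul ((EL.cda_lap hent hpos hφ.smooth.contDiffAt).add
      (contDiffAt_const.mul
        (EL.cda_gInner hent hpos hu' hφ.smooth.contDiffAt)))).mul
      (EL.cda_sqrtDet hent hpos)).continuousAt
  have hZzero : ∀ x ∉ tsupport φ, Z x = 0 := by
    intro x hx
    simp [hZ, EL.gInner_right_zero hx, EL.lap_phi_zero hx]
  have hZint : Integrable Z :=
    EL.integrable_of_vanish hφ.compactSupport hSΩ hZcont hZzero
  -- ∫_Ω X' = 0 via the divergence identity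
  have hX'eq : ∫ x in Ω, X' x = 0 := by
    rw [setIntegral_congr_fun hg.isOpen.measurableSet
      (fun x hx => by
        have hent := EL.hent' hg hx
        have hpos := EL.hpos' hg hx
        have hne : sqrtDet g x ≠ 0 := (EL.sqrtDet_pos hpos).ne'
        have ha : DifferentiableAt ℝ α x :=
          (EL.cda_alpha hg hJ₀ hu hx).differentiableAt (by simp)
        have hhd : ∀ i, DifferentiableAt ℝ (EL.hh g φ i) x := fun i =>
          (EL.cda_hh hent hpos hφ.smooth.contDiffAt i).differentiableAt (by simp)
        exact (EL.sum_pd_FF_eq hne ha hhd).symm)]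
    exact hXset
  -- ∫_Ω Z = 0 via criticality
  have hZeq : ∫ x in Ω, Z x = 0 := hcrit φ hφ
  -- conclusion
  have key : ∫ x in Ω, (gInner g α φ x - 2 * α x * gInner g u φ x) * sqrtDet g x = 0 := by
    have e : ∀ x : V4, (gInner g α φ x - 2 * α x * gInner g u φ x) * sqrtDet g x
        = X' x - Z x := by
      intro x
      have h1 : α x = J₀ x - lap g u x - gNormSq g u x := rfl
      simp only [hX', hZ]
      rw [← h1]
      ring
    calc ∫ x in Ω, (gInner g α φ x - 2 * α x * gInner g u φ x) * sqrtDet g x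
        = ∫ x in Ω, (X' x - Z x) := by
          exact setIntegral_congr_fun hg.isOpen.measurableSet (fun x _ => e x)
      _ = (∫ x in Ω, X' x) - ∫ x in Ω, Z x :=
          integral_sub hX'int.integrableOn hZint.integrableOn
      _ = 0 := by rw [hX'eq, hZeq]; ring
  rw [setIntegral_congr_fun hg.isOpen.measurableSet
    (fun x hx => by
      have hud : DifferentiableAt ℝ u x :=
        (hu.contDiffAt (hg.isOpen.mem_nhds hx)).differentiableAt (by simp)
      have ha : DifferentiableAt ℝ α x :=
        (EL.cda_alpha hg hJ₀ hu hx).differentiableAt (by simp)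
      exact EL.target_eq hud ha)]
  exact key
end
end

section
/- Let γ_S > 0 and assume the Sobolev inequality: for every f ∈ C_c^∞(Ω), (∫_Ω f⁴ dvol_g)^{1/2} ≤ γ_S ∫_Ω |df|_g² dvol_g. Assume vol_g(Ω) < ∞. Then every u ∈ C_c^∞(Ω) with (∫_Ω |du|_g⁴ dvol_g)^{1/4} ≤ (2γ_S)^{−1/2} satisfies (∫_Ω e^{4u} dvol_g)^{1/4} ≤ (3 + √2) · vol_g(Ω)^{1/4}. In particular the volume of the conformal metric e^{2u}g is finite and controlled by that of g. -/
open MeasureTheory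

noncomputable section

/-- Volume bound for the conformal metric `e^{2u}g`: under the Sobolev
inequality and finite volume, any `u ∈ C_c^∞(Ω)` with `‖|du|_g‖_{L⁴} ≤ (2γ_S)^{−1/2}`
satisfies `vol_{e^{2u}g}(Ω)^{1/4} = (∫ e^{4u} dvol_g)^{1/4} ≤ (3 + √2) vol_g(Ω)^{1/4}`. -/
theorem conformal_volume_bound
    (Ω : Set V4) (g : V4 → Matrix (Fin 4) (Fin 4) ℝ) (hg : IsMetric Ω g)
    (γS : ℝ) (hγS : 0 < γS)
    (hSob : ∀ f : V4 → ℝ, IsTestFn Ω f →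
      (∫ x in Ω, f x ^ 4 * sqrtDet g x) ^ (1 / 2 : ℝ) ≤
        γS * ∫ x in Ω, gNormSq g f x * sqrtDet g x)
    (hvol : IntegrableOn (sqrtDet g) Ω) :
    ∀ u : V4 → ℝ, IsTestFn Ω u →
      (∫ x in Ω, (gNormSq g u x) ^ 2 * sqrtDet g x) ^ (1 / 4 : ℝ) ≤
        1 / Real.sqrt (2 * γS) →
      (∫ x in Ω, Real.exp (4 * u x) * sqrtDet g x) ^ (1 / 4 : ℝ) ≤
        (3 + Real.sqrt 2) * (∫ x in Ω, sqrtDet g x) ^ (1 / 4 : ℝ) := by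
  intro u hu hD4
  have hΩm : MeasurableSet Ω := hg.isOpen.measurableSet
  have hSnn : ∀ x, 0 ≤ sqrtDet g x := fun x => Real.sqrt_nonneg _
  -- the test function f = e^u - 1
  set f : V4 → ℝ := fun y => Real.exp (u y) - 1 with hf_def
  have hf_smooth : ContDiff ℝ (⊤ : ℕ∞) f :=
    (Real.contDiff_exp.comp hu.smooth).sub contDiff_const
  have hf_supp : Function.support f ⊆ tsupport u := by
    intro x hx
    by_contra hxt
    have hux : u x = 0 := image_eq_zero_of_notMem_tsupport hxt
    exact hx (by simp [hf_def, hux])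
  have hf_ts : tsupport f ⊆ tsupport u :=
    closure_minimal hf_supp (isClosed_tsupport u)
  have hf_cs : HasCompactSupport f :=
    IsCompact.of_isClosed_subset hu.compactSupport (isClosed_tsupport f) hf_ts
  have hftest : IsTestFn Ω f := ⟨hf_smooth, hf_cs, hf_ts.trans hu.support_subset⟩
  -- derivative of f
  have hpd_f : ∀ (i : Fin 4) (x : V4), pd i f x = Real.exp (u x) * pd i u x := by
    intro i x
    have hdiff : DifferentiableAt ℝ u x := hu.smooth.differentiable (by simp) x
    simp only [pd, hf_def]
    rw [fderiv_sub_const, fderiv_exp hdiff]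
    simp
  have hfnorm : ∀ x, gNormSq g f x = Real.exp (2 * u x) * gNormSq g u x := by
    intro x
    have he : Real.exp (2 * u x) = Real.exp (u x) * Real.exp (u x) := by
      rw [two_mul, Real.exp_add]
    simp only [gNormSq, gInner, hpd_f, he, Finset.mul_sum]
    exact Finset.sum_congr rfl fun i _ => Finset.sum_congr rfl fun j _ => by ring
  -- pointwise bound e^{4u} ≤ 3 f^4 + 94
  have hpt : ∀ x, Real.exp (4 * u x) ≤ 3 * f x ^ 4 + 94 := by
    intro x
    have h1 : Real.exp (4 * u x) = (1 + f x) ^ 4 := by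
      have h2 : (1 : ℝ) + f x = Real.exp (u x) := by simp [hf_def]
      rw [h2, ← Real.exp_nat_mul]
      norm_num
    rw [h1]
    nlinarith [sq_nonneg (f x ^ 2 - f x - 3), sq_nonneg (f x - 2)]
  -- boundedness
  obtain ⟨Cu, hCu⟩ := hu.compactSupport.exists_bound_of_continuous hu.smooth.continuous
  obtain ⟨Cf, hCf⟩ := hf_cs.exists_bound_of_continuous hf_smooth.continuous
  have hCu' : ∀ x, u x ≤ Cu := fun x => (le_abs_self _).trans (by simpa using hCu x)
  -- integrability of the main integrands
  have hX_int : IntegrableOn (fun x => Real.exp (4 * u x) * sqrtDet g x) Ω := by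
    refine hvol.bdd_mul (c := Real.exp (4 * Cu)) ?_ (Filter.Eventually.of_forall fun x => ?_)
    · exact (Real.continuous_exp.comp (continuous_const.mul
        hu.smooth.continuous)).aestronglyMeasurable
    · rw [Real.norm_eq_abs, abs_of_pos (Real.exp_pos _)]
      exact Real.exp_le_exp.2 (by linarith [hCu' x])
  have hA_int : IntegrableOn (fun x => f x ^ 4 * sqrtDet g x) Ω := by
    refine hvol.bdd_mul (c := Cf ^ 4) ?_ (Filter.Eventually.of_forall fun x => ?_)
    · exact (hf_smooth.continuous.pow 4).aestronglyMeasurable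
    · rw [norm_pow]
      exact pow_le_pow_left₀ (norm_nonneg _) (hCf x) 4
  -- continuity on Ω of the metric data
  have hg_cont : ContinuousOn (fun x => g x) Ω :=
    continuousOn_pi.2 fun i => continuousOn_pi.2 fun j => (hg.smooth i j).continuousOn
  have hdet_cont : ContinuousOn (fun x => (g x).det) Ω :=
    (continuous_id.matrix_det).comp_continuousOn hg_cont
  have hdet_ne : ∀ x ∈ Ω, (g x).det ≠ 0 := fun x hx => (hg.posDef x hx).det_pos.ne'
  have hinv_cont : ∀ i j, ContinuousOn (fun x => (g x)⁻¹ i j) Ω := by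
    intro i j
    have h1 : ContinuousOn (fun x => ((g x).det)⁻¹ * (g x).adjugate i j) Ω := by
      refine (hdet_cont.inv₀ hdet_ne).mul ?_
      exact ((continuous_apply j).comp ((continuous_apply i).comp
        continuous_id.matrix_adjugate)).comp_continuousOn hg_cont
    refine h1.congr fun x hx => ?_
    rw [Matrix.inv_def, Matrix.smul_apply, Ring.inverse_eq_inv', smul_eq_mul]
  have hS_cont : ContinuousOn (sqrtDet g) Ω :=
    Real.continuous_sqrt.comp_continuousOn hdet_cont
  have hpd_cont : ∀ i : Fin 4, Continuous (pd i u) := by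
    intro i
    have h1 : ContDiff ℝ (⊤ : ℕ∞) (fderiv ℝ u) := hu.smooth.fderiv_right (by simp)
    exact (ContinuousLinearMap.apply ℝ ℝ (Pi.single i 1 : V4)).continuous.comp h1.continuous
  have hGN_cont : ContinuousOn (gNormSq g u) Ω := by
    have : ContinuousOn (fun x => ∑ i, ∑ j, (g x)⁻¹ i j * pd i u x * pd j u x) Ω := by
      refine continuousOn_finset_sum _ fun i _ => continuousOn_finset_sum _ fun j _ => ?_
      exact ((hinv_cont i j).mul (hpd_cont i).continuousOn).mul (hpd_cont j).continuousOn
    exact this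
  -- gNormSq u vanishes outside tsupport u
  have hGN_zero : ∀ x, x ∉ tsupport u → gNormSq g u x = 0 := by
    intro x hx
    have hfd : fderiv ℝ u x = 0 :=
      Function.notMem_support.mp fun h => hx (support_fderiv_subset (𝕜 := ℝ) h)
    simp [gNormSq, gInner, pd, hfd]
  -- integrability of gNormSq² √det on Ω
  have hD_int : IntegrableOn (fun x => gNormSq g u x ^ 2 * sqrtDet g x) Ω := by
    have hcont : ContinuousOn (fun x => gNormSq g u x ^ 2 * sqrtDet g x) Ω :=
      (hGN_cont.pow 2).mul hS_cont
    have hKΩ : tsupport u ⊆ Ω := hu.support_subset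
    have hintK : IntegrableOn (fun x => gNormSq g u x ^ 2 * sqrtDet g x) (tsupport u) :=
      (hcont.mono hKΩ).integrableOn_compact hu.compactSupport
    have hint0 : IntegrableOn (fun x => gNormSq g u x ^ 2 * sqrtDet g x) (Ω \ tsupport u) := by
      refine integrableOn_zero.congr_fun (fun x hx => ?_)
        (hΩm.diff (isClosed_tsupport u).measurableSet)
      simp [hGN_zero x hx.2]
    exact (hintK.union hint0).mono_set fun x hx => by
      by_cases hxK : x ∈ tsupport u
      · exact Or.inl hxK
      · exact Or.inr ⟨hx, hxK⟩
  -- nonnegativity of gNormSq on Ω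
  have hGN_nn : ∀ x ∈ Ω, 0 ≤ gNormSq g u x := by
    intro x hx
    have h := (hg.posDef x hx).inv.posSemidef.dotProduct_mulVec_nonneg fun i => pd i u x
    have e : dotProduct (star fun i => pd i u x) ((g x)⁻¹.mulVec fun i => pd i u x) =
        ∑ i, ∑ j, (g x)⁻¹ i j * pd i u x * pd j u x := by
      simp only [star_trivial, dotProduct, Matrix.mulVec, Finset.mul_sum]
      exact Finset.sum_congr rfl fun i _ => Finset.sum_congr rfl fun j _ => by ring
    rw [e] at h
    exact h
  -- abbreviations
  set A := ∫ x in Ω, f x ^ 4 * sqrtDet g x with hA_def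
  set X := ∫ x in Ω, Real.exp (4 * u x) * sqrtDet g x with hX_def
  set V := ∫ x in Ω, sqrtDet g x with hV_def
  set D := ∫ x in Ω, gNormSq g u x ^ 2 * sqrtDet g x with hD_def
  have hAnn : 0 ≤ A := integral_nonneg fun x => mul_nonneg (by positivity) (hSnn x)
  have hXnn : 0 ≤ X := integral_nonneg fun x => mul_nonneg (Real.exp_pos _).le (hSnn x)
  have hVnn : 0 ≤ V := integral_nonneg fun x => hSnn x
  have hDnn : 0 ≤ D := integral_nonneg fun x => mul_nonneg (sq_nonneg _) (hSnn x)
  -- Cauchy–Schwarz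
  set F : V4 → ℝ := fun x => Real.exp (2 * u x) * Real.sqrt (sqrtDet g x) with hF_def
  set G : V4 → ℝ := fun x => gNormSq g u x * Real.sqrt (sqrtDet g x) with hG_def
  have hsqrtS : AEStronglyMeasurable (fun x => Real.sqrt (sqrtDet g x)) (volume.restrict Ω) :=
    Real.continuous_sqrt.comp_aestronglyMeasurable hvol.aestronglyMeasurable
  have hF_aesm : AEStronglyMeasurable F (volume.restrict Ω) :=
    ((Real.continuous_exp.comp (continuous_const.mul
      hu.smooth.continuous)).aestronglyMeasurable).mul hsqrtS
  have hG_aesm : AEStronglyMeasurable G (volume.restrict Ω) :=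
    (hGN_cont.aestronglyMeasurable hΩm).mul hsqrtS
  have hF2 : (fun x => F x ^ 2) = fun x => Real.exp (4 * u x) * sqrtDet g x := by
    funext x
    have h1 : Real.sqrt (sqrtDet g x) ^ 2 = sqrtDet g x := Real.sq_sqrt (hSnn x)
    have h2 : Real.exp (2 * u x) ^ 2 = Real.exp (4 * u x) := by
      rw [sq, ← Real.exp_add]
      ring_nf
    simp only [hF_def, mul_pow, h1, h2]
  have hG2 : (fun x => G x ^ 2) = fun x => gNormSq g u x ^ 2 * sqrtDet g x := by
    funext x
    have h1 : Real.sqrt (sqrtDet g x) ^ 2 = sqrtDet g x := Real.sq_sqrt (hSnn x)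
    simp only [hG_def, mul_pow, h1]
  have hF_mem : MemLp F (ENNReal.ofReal 2) (volume.restrict Ω) := by
    rw [show ENNReal.ofReal (2 : ℝ) = 2 by norm_num]
    exact (memLp_two_iff_integrable_sq hF_aesm).2 (by rw [hF2]; exact hX_int)
  have hG_mem : MemLp G (ENNReal.ofReal 2) (volume.restrict Ω) := by
    rw [show ENNReal.ofReal (2 : ℝ) = 2 by norm_num]
    exact (memLp_two_iff_integrable_sq hG_aesm).2 (by rw [hG2]; exact hD_int)
  have hF_nn : 0 ≤ᵐ[volume.restrict Ω] F :=
    Filter.Eventually.of_forall fun x => by positivity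
  have hG_nn : 0 ≤ᵐ[volume.restrict Ω] G := by
    refine (ae_restrict_iff' hΩm).2 (Filter.Eventually.of_forall fun x hx => ?_)
    exact mul_nonneg (hGN_nn x hx) (Real.sqrt_nonneg _)
  have hpq : (2 : ℝ).HolderConjugate 2 := Real.holderConjugate_iff.mpr ⟨one_lt_two, by norm_num⟩
  have hCS := integral_mul_le_Lp_mul_Lq_of_nonneg hpq hF_nn hG_nn hF_mem hG_mem
  simp_rw [Real.rpow_two] at hCS
  rw [hF2, hG2] at hCS
  have hFG : (fun x => F x * G x) = fun x => gNormSq g f x * sqrtDet g x := by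
    funext x
    have h1 : Real.sqrt (sqrtDet g x) * Real.sqrt (sqrtDet g x) = sqrtDet g x :=
      Real.mul_self_sqrt (hSnn x)
    simp only [hF_def, hG_def, hfnorm x]
    calc Real.exp (2 * u x) * Real.sqrt (sqrtDet g x) *
          (gNormSq g u x * Real.sqrt (sqrtDet g x))
        = Real.exp (2 * u x) * gNormSq g u x *
          (Real.sqrt (sqrtDet g x) * Real.sqrt (sqrtDet g x)) := by ring
      _ = Real.exp (2 * u x) * gNormSq g u x * sqrtDet g x := by rw [h1]
  rw [hFG] at hCS
  -- the D^{1/2} bound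
  have hD12 : D ^ (1 / 2 : ℝ) ≤ 1 / (2 * γS) := by
    have e : D ^ (1 / 2 : ℝ) = (D ^ (1 / 4 : ℝ)) ^ 2 := by
      rw [← Real.rpow_natCast (D ^ (1 / 4 : ℝ)) 2, ← Real.rpow_mul hDnn]
      norm_num
    rw [e]
    calc (D ^ (1 / 4 : ℝ)) ^ 2 ≤ (1 / Real.sqrt (2 * γS)) ^ 2 :=
          pow_le_pow_left₀ (Real.rpow_nonneg hDnn _) hD4 2
      _ = 1 / (2 * γS) := by
          rw [div_pow, one_pow, Real.sq_sqrt (by positivity)]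
  -- chain of inequalities : A^{1/2} ≤ X^{1/2}/2
  have hX12nn : (0 : ℝ) ≤ X ^ (1 / 2 : ℝ) := Real.rpow_nonneg hXnn _
  have hchain : A ^ (1 / 2 : ℝ) ≤ X ^ (1 / 2 : ℝ) / 2 := by
    calc A ^ (1 / 2 : ℝ) ≤ γS * ∫ x in Ω, gNormSq g f x * sqrtDet g x := hSob f hftest
      _ ≤ γS * (X ^ (1 / 2 : ℝ) * D ^ (1 / 2 : ℝ)) :=
          mul_le_mul_of_nonneg_left hCS hγS.le
      _ ≤ γS * (X ^ (1 / 2 : ℝ) * (1 / (2 * γS))) := by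
          refine mul_le_mul_of_nonneg_left ?_ hγS.le
          exact mul_le_mul_of_nonneg_left hD12 hX12nn
      _ = X ^ (1 / 2 : ℝ) / 2 := by field_simp
  have hA_le : A ≤ X / 4 := by
    have h1 : (A ^ (1 / 2 : ℝ)) ^ 2 ≤ (X ^ (1 / 2 : ℝ) / 2) ^ 2 :=
      pow_le_pow_left₀ (Real.rpow_nonneg hAnn _) hchain 2
    have e1 : (A ^ (1 / 2 : ℝ)) ^ 2 = A := by
      rw [← Real.rpow_natCast (A ^ (1 / 2 : ℝ)) 2, ← Real.rpow_mul hAnn]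
      norm_num
    have e2 : (X ^ (1 / 2 : ℝ)) ^ 2 = X := by
      rw [← Real.rpow_natCast (X ^ (1 / 2 : ℝ)) 2, ← Real.rpow_mul hXnn]
      norm_num
    rw [div_pow, e1, e2] at h1
    linarith
  -- X ≤ 3A + 94V
  have hXle : X ≤ 3 * A + 94 * V := by
    have hmono : ∀ x, Real.exp (4 * u x) * sqrtDet g x ≤
        3 * (f x ^ 4 * sqrtDet g x) + 94 * sqrtDet g x := by
      intro x
      have h1 := hpt x
      have h2 := hSnn x
      nlinarith
    have h3 : X ≤ ∫ x in Ω, (3 * (f x ^ 4 * sqrtDet g x) + 94 * sqrtDet g x) :=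
      integral_mono hX_int ((hA_int.const_mul 3).add (hvol.const_mul 94)) hmono
    rwa [integral_add (hA_int.const_mul 3) (hvol.const_mul 94),
      integral_const_mul, integral_const_mul] at h3
  have hX376 : X ≤ 376 * V := by linarith
  -- final computation
  have h376 : (376 : ℝ) ^ (1 / 4 : ℝ) ≤ 3 + Real.sqrt 2 := by
    have hb : (0 : ℝ) ≤ 3 + Real.sqrt 2 := by positivity
    have h4 : (376 : ℝ) ≤ (3 + Real.sqrt 2) ^ (4 : ℕ) := by
      nlinarith [Real.sq_sqrt (show (0:ℝ) ≤ 2 by norm_num), Real.sqrt_nonneg 2,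
        sq_nonneg (Real.sqrt 2 - 3/2)]
    calc (376 : ℝ) ^ (1 / 4 : ℝ) ≤ ((3 + Real.sqrt 2) ^ (4 : ℕ)) ^ (1 / 4 : ℝ) :=
          Real.rpow_le_rpow (by norm_num) h4 (by norm_num)
      _ = 3 + Real.sqrt 2 := by
          rw [← Real.rpow_natCast (3 + Real.sqrt 2) 4, ← Real.rpow_mul hb]
          norm_num
  calc X ^ (1 / 4 : ℝ) ≤ (376 * V) ^ (1 / 4 : ℝ) :=
        Real.rpow_le_rpow hXnn hX376 (by norm_num)
    _ = (376 : ℝ) ^ (1 / 4 : ℝ) * V ^ (1 / 4 : ℝ) := Real.mul_rpow (by norm_num) hVnn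
    _ ≤ (3 + Real.sqrt 2) * V ^ (1 / 4 : ℝ) :=
        mul_le_mul_of_nonneg_right h376 (Real.rpow_nonneg hVnn _)
end
end

section
/- Let Λ_max > 0, let Λ : 𝔻∖{0} → (0, Λ_max] be measurable, and let h : 𝔻∖{0} → ℝ^{2×2} be a measurable map into symmetric matrices such that for every x ∈ 𝔻∖{0} and every v ∈ ℝ²: ‖v‖² ≤ ⟨h(x)v, v⟩ ≤ (4πΛ(x))² ‖v‖². Assume the integrability condition ∫_{𝔻∖{0}} ((4πΛ(x))² − 1)² / |x|² dx < ∞. Then ∫_{𝔻∖{0}} [ (x₁ h₁₂(x) + x₂ (h₂₂(x) − 1))² + (x₁ (h₁₁(x) − 1) + x₂ h₁₂(x))² ] / |x|⁴ dx < ∞. -/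
open MeasureTheory

noncomputable section

/-- The punctured open unit disk in `ℝ²`. -/
def PDisk : Set (ℝ × ℝ) := {x | x ≠ 0 ∧ x.1 ^ 2 + x.2 ^ 2 < 1}

private lemma psd_form (p q r v1 v2 : ℝ) (hp : 0 ≤ p) (hr : 0 ≤ r) (hq : q ^ 2 ≤ p * r) :
    0 ≤ p * v1 ^ 2 + 2 * q * v1 * v2 + r * v2 ^ 2 := by
  rcases eq_or_lt_of_le hp with h | h
  · have hq0 : q = 0 := by nlinarith
    subst hq0
    nlinarith [mul_nonneg hr (sq_nonneg v2), sq_nonneg v1, mul_nonneg hp (sq_nonneg v1)]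
  · nlinarith [sq_nonneg (p * v1 + q * v2), mul_nonneg (sub_nonneg.2 hq) (sq_nonneg v2)]

private lemma key_ineq (a b d c v1 v2 : ℝ) (ha : 0 ≤ a) (hd : 0 ≤ d) (hac : a ≤ c)
    (hdc : d ≤ c) (h1 : b ^ 2 ≤ a * d) (h2 : b ^ 2 ≤ (c - a) * (c - d)) :
    (a * v1 + b * v2) ^ 2 + (b * v1 + d * v2) ^ 2 ≤ c ^ 2 * (v1 ^ 2 + v2 ^ 2) := by
  have hc : 0 ≤ c := ha.trans hac
  have hp : 0 ≤ c * a - a ^ 2 - b ^ 2 := by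
    rcases le_or_gt d (c - a) with hcase | hcase
    · nlinarith
    · nlinarith
  have hr : 0 ≤ c * d - d ^ 2 - b ^ 2 := by
    rcases le_or_gt a (c - d) with hcase | hcase
    · nlinarith
    · nlinarith
  have hdet : (b * (c - a - d)) ^ 2 ≤ (c * a - a ^ 2 - b ^ 2) * (c * d - d ^ 2 - b ^ 2) := by
    nlinarith [mul_nonneg (sub_nonneg.2 h1) (sub_nonneg.2 h2)]
  have h3 : (a * v1 + b * v2) ^ 2 + (b * v1 + d * v2) ^ 2
      ≤ c * (a * v1 ^ 2 + 2 * b * v1 * v2 + d * v2 ^ 2) := by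
    nlinarith [psd_form (c * a - a ^ 2 - b ^ 2) (b * (c - a - d)) (c * d - d ^ 2 - b ^ 2)
      v1 v2 hp hr hdet]
  have h4 : a * v1 ^ 2 + 2 * b * v1 * v2 + d * v2 ^ 2 ≤ c * (v1 ^ 2 + v2 ^ 2) := by
    nlinarith [psd_form (c - a) (-b) (c - d) v1 v2 (by linarith) (by linarith) (by nlinarith)]
  nlinarith [mul_le_mul_of_nonneg_left h4 hc]

/-- paper's Claim 2.3.  If the symmetric matrix field `h` is pinched
between `1` and `(4πΛ)²` and `((4πΛ)² − 1)²/|x|²` is integrable on the punctured disk,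
then the squared Euclidean norm of the 1-form `*_g d(log r) − dθ`, namely
`[(x₁h₁₂ + x₂(h₂₂−1))² + (x₁(h₁₁−1) + x₂h₁₂)²]/|x|⁴`, is integrable on the punctured
disk. -/
theorem starLog_minus_dtheta_L2
    (Λmax : ℝ) (hΛmax : 0 < Λmax)
    (Λ : ℝ × ℝ → ℝ) (hΛmeas : Measurable Λ)
    (hΛrange : ∀ x ∈ PDisk, 0 < Λ x ∧ Λ x ≤ Λmax)
    (h : ℝ × ℝ → Matrix (Fin 2) (Fin 2) ℝ)
    (hmeas : ∀ i j, Measurable fun x => h x i j)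
    (hsymm : ∀ x ∈ PDisk, (h x).IsSymm)
    (hpinch : ∀ x ∈ PDisk, ∀ v : Fin 2 → ℝ,
      (∑ i, v i ^ 2) ≤ (∑ i, ∑ j, h x i j * v i * v j) ∧
      (∑ i, ∑ j, h x i j * v i * v j) ≤ (4 * Real.pi * Λ x) ^ 2 * ∑ i, v i ^ 2)
    (hint : IntegrableOn
      (fun x => ((4 * Real.pi * Λ x) ^ 2 - 1) ^ 2 / (x.1 ^ 2 + x.2 ^ 2)) PDisk) :
    IntegrableOn
      (fun x =>
        ((x.1 * h x 0 1 + x.2 * (h x 1 1 - 1)) ^ 2 +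
          (x.1 * (h x 0 0 - 1) + x.2 * h x 0 1) ^ 2) / (x.1 ^ 2 + x.2 ^ 2) ^ 2)
      PDisk := by
  have hPD : MeasurableSet PDisk := by
    have : PDisk = {x : ℝ × ℝ | x ≠ 0} ∩ {x | x.1 ^ 2 + x.2 ^ 2 < 1} := rfl
    rw [this]
    exact (isClosed_singleton (x := (0 : ℝ × ℝ))).isOpen_compl.measurableSet.inter
      (measurableSet_lt (by fun_prop) measurable_const)
  have hfm : AEStronglyMeasurable
      (fun x : ℝ × ℝ =>
        ((x.1 * h x 0 1 + x.2 * (h x 1 1 - 1)) ^ 2 +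
          (x.1 * (h x 0 0 - 1) + x.2 * h x 0 1) ^ 2) / (x.1 ^ 2 + x.2 ^ 2) ^ 2)
      (volume.restrict PDisk) := by
    apply Measurable.aestronglyMeasurable
    have h01 := hmeas 0 1
    have h00 := hmeas 0 0
    have h11 := hmeas 1 1
    fun_prop
  refine Integrable.mono' hint hfm ?_
  filter_upwards [ae_restrict_mem hPD] with x hx
  -- pointwise bound
  obtain ⟨hx0, hx1⟩ := hx
  set a := h x 0 0 - 1 with ha_def
  set b := h x 0 1 with hb_def
  set d := h x 1 1 - 1 with hd_def
  set c := (4 * Real.pi * Λ x) ^ 2 - 1 with hc_def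
  have hb10 : h x 1 0 = b := ((hsymm x ⟨hx0, hx1⟩).apply 1 0).symm
  have hQ : ∀ v0 v1 : ℝ,
      0 ≤ a * v0 ^ 2 + 2 * b * v0 * v1 + d * v1 ^ 2 ∧
      a * v0 ^ 2 + 2 * b * v0 * v1 + d * v1 ^ 2 ≤ c * (v0 ^ 2 + v1 ^ 2) := by
    intro v0 v1
    obtain ⟨hl, hu⟩ := hpinch x ⟨hx0, hx1⟩ ![v0, v1]
    simp only [Fin.sum_univ_two, Matrix.cons_val_zero, Matrix.cons_val_one, Matrix.head_cons,
      hb10] at hl hu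
    constructor <;> [nlinarith; nlinarith]
  have ha : 0 ≤ a := by have := (hQ 1 0).1; nlinarith
  have hd : 0 ≤ d := by have := (hQ 0 1).1; nlinarith
  have hac : a ≤ c := by have := (hQ 1 0).2; nlinarith
  have hdc : d ≤ c := by have := (hQ 0 1).2; nlinarith
  have h1 : b ^ 2 ≤ a * d := by
    have hdis := discrim_le_zero (a := a) (b := 2 * b) (c := d) fun t => by
      have := (hQ t 1).1; nlinarith
    unfold discrim at hdis; nlinarith
  have h2 : b ^ 2 ≤ (c - a) * (c - d) := by
    have hdis := discrim_le_zero (a := c - a) (b := -(2 * b)) (c := c - d) fun t => by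
      have := (hQ t 1).2; nlinarith
    unfold discrim at hdis; nlinarith
  have hkey := key_ineq a b d c x.1 x.2 ha hd hac hdc h1 h2
  have hs : 0 < x.1 ^ 2 + x.2 ^ 2 := by
    have h12 : x.1 ≠ 0 ∨ x.2 ≠ 0 := by
      by_contra hcon
      push_neg at hcon
      exact hx0 (Prod.ext hcon.1 hcon.2)
    rcases h12 with h' | h' <;> positivity
  have hnum : (x.1 * b + x.2 * d) ^ 2 + (x.1 * a + x.2 * b) ^ 2
      ≤ c ^ 2 * (x.1 ^ 2 + x.2 ^ 2) := by nlinarith [hkey]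
  have hfinal : ((x.1 * b + x.2 * d) ^ 2 + (x.1 * a + x.2 * b) ^ 2) / (x.1 ^ 2 + x.2 ^ 2) ^ 2
      ≤ c ^ 2 / (x.1 ^ 2 + x.2 ^ 2) := by
    have step := (div_le_div_iff_of_pos_right (show (0:ℝ) < (x.1 ^ 2 + x.2 ^ 2) ^ 2 by positivity)).2 hnum
    have heq : c ^ 2 * (x.1 ^ 2 + x.2 ^ 2) / (x.1 ^ 2 + x.2 ^ 2) ^ 2
        = c ^ 2 / (x.1 ^ 2 + x.2 ^ 2) := by
      field_simp
    linarith [heq ▸ step]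
  have hnn : 0 ≤ ((x.1 * b + x.2 * d) ^ 2 + (x.1 * a + x.2 * b) ^ 2) / (x.1 ^ 2 + x.2 ^ 2) ^ 2 :=
    by positivity
  calc ‖((x.1 * b + x.2 * d) ^ 2 + (x.1 * a + x.2 * b) ^ 2) / (x.1 ^ 2 + x.2 ^ 2) ^ 2‖
      = ((x.1 * b + x.2 * d) ^ 2 + (x.1 * a + x.2 * b) ^ 2) / (x.1 ^ 2 + x.2 ^ 2) ^ 2 :=
        Real.norm_of_nonneg hnn
    _ ≤ c ^ 2 / (x.1 ^ 2 + x.2 ^ 2) := hfinal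
    _ = ((4 * Real.pi * Λ x) ^ 2 - 1) ^ 2 / (x.1 ^ 2 + x.2 ^ 2) := by rw [hc_def]
end
end

section
/- Define λ : ℝ²∖{(0,0)} → ℝ by λ(x, y) = 2 log √(x² + y²) + x/(x² + y²) (the logarithm of the conformal factor of the pullback of the Euclidean metric by z ↦ e^{1/z}). Then for every φ ∈ C_c^∞(ℝ²), the limit of the circle integrals of φ against the radial derivative of λ exists and equals lim_{ε→0⁺} ε ∫₀^{2π} φ(ε cos θ, ε sin θ) · ⟨∇λ(ε cos θ, ε sin θ), (cos θ, sin θ)⟩ dθ = 4π φ(0,0) − π ∂₁φ(0,0). In particular the limit involves the first derivative of the test function at the origin, so the distributional exterior derivative of the connection form *dλ is not a distribution of order 0 at the origin. -/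
open MeasureTheory

noncomputable section

/-- The logarithm of the conformal factor of the pullback of the Euclidean metric by
`z ↦ e^{1/z}`: `λ(x,y) = 2 log √(x² + y²) + x/(x² + y²)`. -/
def lamEss (p : ℝ × ℝ) : ℝ :=
  2 * Real.log (Real.sqrt (p.1 ^ 2 + p.2 ^ 2)) + p.1 / (p.1 ^ 2 + p.2 ^ 2)

lemma lamEss_eq : lamEss = fun p : ℝ × ℝ =>
    Real.log (p.1 ^ 2 + p.2 ^ 2) + p.1 / (p.1 ^ 2 + p.2 ^ 2) := by
  funext p
  unfold lamEss
  rw [Real.log_sqrt (by positivity)]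
  ring

lemma fderiv_lamEss (ε θ : ℝ) (hε : 0 < ε) :
    fderiv ℝ lamEss (ε * Real.cos θ, ε * Real.sin θ) (Real.cos θ, Real.sin θ)
      = 2 / ε - Real.cos θ / ε ^ 2 := by
  have hcs : Real.cos θ ^ 2 + Real.sin θ ^ 2 = 1 := by
    rw [add_comm]; exact Real.sin_sq_add_cos_sq θ
  set c := Real.cos θ
  set s := Real.sin θ
  -- differentiability at the (shifted) point
  have hu : DifferentiableAt ℝ (fun p : ℝ × ℝ => p.1 ^ 2 + p.2 ^ 2)
      ((ε + 0) * c, (ε + 0) * s) := by fun_prop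
  have hqval : (((ε + 0) * c, (ε + 0) * s) : ℝ × ℝ).1 ^ 2
      + (((ε + 0) * c, (ε + 0) * s) : ℝ × ℝ).2 ^ 2 = (ε + 0) ^ 2 := by
    simp only [mul_pow, ← mul_add, hcs, mul_one]
  have hεne : (ε : ℝ) + 0 ≠ 0 := by simpa using hε.ne'
  have hqne : (((ε + 0) * c, (ε + 0) * s) : ℝ × ℝ).1 ^ 2
      + (((ε + 0) * c, (ε + 0) * s) : ℝ × ℝ).2 ^ 2 ≠ 0 := by
    rw [hqval]; positivity
  have hdiff : DifferentiableAt ℝ lamEss ((ε + 0) * c, (ε + 0) * s) := by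
    rw [lamEss_eq]
    apply DifferentiableAt.add
    · exact hu.log hqne
    · simp only [div_eq_mul_inv]
      exact differentiableAt_fst.mul (hu.inv hqne)
  -- the line
  have hline : HasDerivAt (fun t : ℝ => (((ε + t) * c, (ε + t) * s) : ℝ × ℝ)) (c, s) 0 := by
    have h1 : HasDerivAt (fun t : ℝ => (ε + t) * c) (1 * c) 0 :=
      (((hasDerivAt_id (0 : ℝ)).const_add ε).mul_const c)
    have h2 : HasDerivAt (fun t : ℝ => (ε + t) * s) (1 * s) 0 :=
      (((hasDerivAt_id (0 : ℝ)).const_add ε).mul_const s)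
    simpa using h1.prodMk h2
  have h1 : HasDerivAt (fun t : ℝ => lamEss ((ε + t) * c, (ε + t) * s))
      (fderiv ℝ lamEss ((ε + 0) * c, (ε + 0) * s) (c, s)) 0 :=
    HasFDerivAt.comp_hasDerivAt (l := lamEss) 0 hdiff.hasFDerivAt hline
  -- explicit 1D formula
  have hfun : (fun t : ℝ => lamEss ((ε + t) * c, (ε + t) * s))
      = fun t : ℝ => Real.log ((ε + t) ^ 2) + c / (ε + t) := by
    funext t
    rw [lamEss_eq]
    simp only
    have hq2 : ((ε + t) * c) ^ 2 + ((ε + t) * s) ^ 2 = (ε + t) ^ 2 := by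
      simp only [mul_pow, ← mul_add, hcs, mul_one]
    rw [hq2]
    congr 1
    rcases eq_or_ne (ε + t) 0 with h | h
    · simp [h]
    · field_simp
  have h2 : HasDerivAt (fun t : ℝ => Real.log ((ε + t) ^ 2) + c / (ε + t))
      (2 / ε - c / ε ^ 2) 0 := by
    have hb : HasDerivAt (fun t : ℝ => ε + t) 1 0 := (hasDerivAt_id (0 : ℝ)).const_add ε
    have hp : HasDerivAt (fun t : ℝ => (ε + t) ^ 2) (((2 : ℕ) * (ε + 0) ^ (2 - 1)) * 1) 0 :=
      hb.pow 2
    have hlog := hp.log (by positivity : ((ε : ℝ) + 0) ^ 2 ≠ 0)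
    have hdivd : HasDerivAt (fun t : ℝ => c / (ε + t))
        ((0 * (ε + 0) - c * 1) / (ε + 0) ^ 2) 0 :=
      (hasDerivAt_const 0 c).div hb hεne
    have := hlog.add hdivd
    refine this.congr_deriv ?_
    have hε0 : ε ≠ 0 := hε.ne'
    simp only [add_zero]
    field_simp
    ring
  have h1' : HasDerivAt (fun t : ℝ => Real.log ((ε + t) ^ 2) + c / (ε + t))
      (fderiv ℝ lamEss ((ε + 0) * c, (ε + 0) * s) (c, s)) 0 := hfun ▸ h1
  have := h1'.unique h2
  simpa using this

/-- paper's Example (c).  For every test function `φ`, the limit as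
`ε → 0⁺` of `ε ∫₀^{2π} φ(ε cos θ, ε sin θ) ∂_r λ(ε cos θ, ε sin θ) dθ` exists and equals
`4π φ(0) − π ∂₁φ(0)`; in particular it involves the first derivative of `φ` at the
origin, so `−d(*dλ)` is not a distribution of order 0 at the origin. -/
theorem essential_singularity_limit
    (φ : ℝ × ℝ → ℝ) (hφ : ContDiff ℝ (⊤ : ℕ∞) φ) (hφc : HasCompactSupport φ) :
    Filter.Tendsto
      (fun ε : ℝ => ε * ∫ θ in (0 : ℝ)..(2 * Real.pi),
        φ (ε * Real.cos θ, ε * Real.sin θ) *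
          fderiv ℝ lamEss (ε * Real.cos θ, ε * Real.sin θ) (Real.cos θ, Real.sin θ))
      (nhdsWithin 0 (Set.Ioi 0))
      (nhds (4 * Real.pi * φ (0, 0) - Real.pi * fderiv ℝ φ (0, 0) (1, 0))) := by
  have hc : Continuous φ := hφ.continuous
  obtain ⟨M, hM⟩ := hφc.exists_bound_of_continuous hc
  obtain ⟨K, hK⟩ := hφ.lipschitzWith_of_hasCompactSupport hφc (by simp)
  set F : ℝ → ℝ → ℝ := fun ε θ =>
    2 * φ (ε * Real.cos θ, ε * Real.sin θ) -
      Real.cos θ * ((φ (ε * Real.cos θ, ε * Real.sin θ) - φ (0, 0)) / ε) with hF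
  set f : ℝ → ℝ := fun θ =>
    2 * φ (0, 0) - Real.cos θ * fderiv ℝ φ (0, 0) (Real.cos θ, Real.sin θ) with hf
  -- Step A : eventual equality
  have hee : ∀ᶠ ε in nhdsWithin 0 (Set.Ioi 0),
      (ε * ∫ θ in (0 : ℝ)..(2 * Real.pi),
        φ (ε * Real.cos θ, ε * Real.sin θ) *
          fderiv ℝ lamEss (ε * Real.cos θ, ε * Real.sin θ) (Real.cos θ, Real.sin θ))
      = ∫ θ in (0 : ℝ)..(2 * Real.pi), F ε θ := by
    filter_upwards [self_mem_nhdsWithin] with ε hε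
    replace hε : (0 : ℝ) < ε := hε
    have hεne : (ε : ℝ) ≠ 0 := hε.ne'
    have h1 : (fun θ => φ (ε * Real.cos θ, ε * Real.sin θ) *
          fderiv ℝ lamEss (ε * Real.cos θ, ε * Real.sin θ) (Real.cos θ, Real.sin θ))
        = fun θ => φ (ε * Real.cos θ, ε * Real.sin θ) * (2 / ε - Real.cos θ / ε ^ 2) :=
      funext fun θ => by rw [fderiv_lamEss ε θ hε]
    rw [h1, ← intervalIntegral.integral_const_mul]
    have h2 : (fun θ => ε * (φ (ε * Real.cos θ, ε * Real.sin θ) * (2 / ε - Real.cos θ / ε ^ 2)))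
        = fun θ => F ε θ - (φ (0, 0) / ε) * Real.cos θ := by
      funext θ
      simp only [hF]
      field_simp
      ring
    rw [h2]
    have hi1 : IntervalIntegrable (F ε) volume 0 (2 * Real.pi) := by
      apply Continuous.intervalIntegrable
      simp only [hF]
      fun_prop
    have hi2 : IntervalIntegrable (fun θ => (φ (0, 0) / ε) * Real.cos θ) volume 0 (2 * Real.pi) :=
      (by fun_prop : Continuous fun θ => (φ (0, 0) / ε) * Real.cos θ).intervalIntegrable _ _
    rw [intervalIntegral.integral_sub hi1 hi2, intervalIntegral.integral_const_mul,
      integral_cos]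
    simp [Real.sin_two_pi]
  -- Step B : dominated convergence
  have hdct : Filter.Tendsto (fun ε => ∫ θ in (0 : ℝ)..(2 * Real.pi), F ε θ)
      (nhdsWithin 0 (Set.Ioi 0)) (nhds (∫ θ in (0 : ℝ)..(2 * Real.pi), f θ)) := by
    apply intervalIntegral.tendsto_integral_filter_of_dominated_convergence
      (bound := fun _ => 2 * M + K)
    · apply Filter.Eventually.of_forall
      intro ε
      apply Continuous.aestronglyMeasurable
      simp only [hF]
      fun_prop
    · filter_upwards [self_mem_nhdsWithin] with ε hε
      replace hε : (0 : ℝ) < ε := hε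
      apply ae_of_all
      intro θ _
      have h1 : |φ (ε * Real.cos θ, ε * Real.sin θ)| ≤ M := by
        simpa [Real.norm_eq_abs] using hM (ε * Real.cos θ, ε * Real.sin θ)
      have hdist : dist ((ε * Real.cos θ, ε * Real.sin θ) : ℝ × ℝ) (0, 0) ≤ ε := by
        rw [Prod.dist_eq]
        apply max_le <;>
        · rw [Real.dist_eq, sub_zero, abs_mul, abs_of_pos hε]
          calc ε * _ ≤ ε * 1 := by
                gcongr
                first
                  | exact Real.abs_cos_le_one θ
                  | exact Real.abs_sin_le_one θ
            _ = ε := mul_one ε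
      have h2 : |φ (ε * Real.cos θ, ε * Real.sin θ) - φ (0, 0)| ≤ K * ε := by
        have hd := hK.dist_le_mul (ε * Real.cos θ, ε * Real.sin θ) (0, 0)
        rw [Real.dist_eq] at hd
        exact hd.trans (by exact mul_le_mul_of_nonneg_left hdist K.coe_nonneg)
      have h3 : |Real.cos θ * ((φ (ε * Real.cos θ, ε * Real.sin θ) - φ (0, 0)) / ε)| ≤ K := by
        rw [abs_mul, abs_div, abs_of_pos hε]
        have hc1 : |Real.cos θ| ≤ 1 := Real.abs_cos_le_one θ
        have h4 : |φ (ε * Real.cos θ, ε * Real.sin θ) - φ (0, 0)| / ε ≤ K := by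
          rw [div_le_iff₀ hε]
          linarith
        calc |Real.cos θ| * (|φ (ε * Real.cos θ, ε * Real.sin θ) - φ (0, 0)| / ε)
            ≤ 1 * (K : ℝ) := mul_le_mul hc1 h4 (by positivity) one_pos.le
          _ = K := one_mul _
      calc ‖F ε θ‖ ≤ ‖2 * φ (ε * Real.cos θ, ε * Real.sin θ)‖ +
            ‖Real.cos θ * ((φ (ε * Real.cos θ, ε * Real.sin θ) - φ (0, 0)) / ε)‖ :=
            norm_sub_le _ _
        _ ≤ 2 * M + K := by
            rw [Real.norm_eq_abs, Real.norm_eq_abs, abs_mul, abs_two]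
            exact add_le_add (by nlinarith [abs_nonneg (φ (ε * Real.cos θ, ε * Real.sin θ))]) h3
    · exact intervalIntegrable_const
    · apply ae_of_all
      intro θ _
      have t1 : Filter.Tendsto (fun ε : ℝ => 2 * φ (ε * Real.cos θ, ε * Real.sin θ))
          (nhdsWithin 0 (Set.Ioi 0)) (nhds (2 * φ (0, 0))) := by
        have hco : Continuous fun ε : ℝ => 2 * φ (ε * Real.cos θ, ε * Real.sin θ) := by fun_prop
        have := hco.tendsto 0
        simp only [zero_mul] at this
        exact this.mono_left nhdsWithin_le_nhds
      have hline : HasDerivAt (fun t : ℝ => ((t * Real.cos θ, t * Real.sin θ) : ℝ × ℝ))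
          (Real.cos θ, Real.sin θ) 0 := by
        simpa using ((hasDerivAt_id (0 : ℝ)).mul_const (Real.cos θ)).prodMk
          ((hasDerivAt_id (0 : ℝ)).mul_const (Real.sin θ))
      have hdφ : HasFDerivAt φ (fderiv ℝ φ ((0 : ℝ) * Real.cos θ, (0 : ℝ) * Real.sin θ))
          ((0 : ℝ) * Real.cos θ, (0 : ℝ) * Real.sin θ) :=
        (hφ.differentiable (by simp) _).hasFDerivAt
      have hcomp := hdφ.comp_hasDerivAt 0 hline
      simp only [zero_mul] at hcomp
      rw [hasDerivAt_iff_tendsto_slope] at hcomp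
      have hsub : nhdsWithin (0 : ℝ) (Set.Ioi 0) ≤ nhdsWithin 0 {(0 : ℝ)}ᶜ :=
        nhdsWithin_mono 0 fun x hx => ne_of_gt hx
      have t2 : Filter.Tendsto
          (fun ε : ℝ => (φ (ε * Real.cos θ, ε * Real.sin θ) - φ (0, 0)) / ε)
          (nhdsWithin 0 (Set.Ioi 0)) (nhds (fderiv ℝ φ (0, 0) (Real.cos θ, Real.sin θ))) := by
        apply (hcomp.mono_left hsub).congr
        intro ε
        simp [slope_def_field, zero_mul]
      simpa only [hF, hf] using t1.sub (t2.const_mul (Real.cos θ))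
  -- Step C : value of the limit integral
  have hval : (∫ θ in (0 : ℝ)..(2 * Real.pi), f θ)
      = 4 * Real.pi * φ (0, 0) - Real.pi * fderiv ℝ φ (0, 0) (1, 0) := by
    have hlin : ∀ θ : ℝ, fderiv ℝ φ (0, 0) (Real.cos θ, Real.sin θ)
        = Real.cos θ * fderiv ℝ φ (0, 0) (1, 0) + Real.sin θ * fderiv ℝ φ (0, 0) (0, 1) := by
      intro θ
      have h : ((Real.cos θ, Real.sin θ) : ℝ × ℝ)
          = Real.cos θ • ((1 : ℝ), (0 : ℝ)) + Real.sin θ • ((0 : ℝ), (1 : ℝ)) := by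
        simp [Prod.ext_iff]
      rw [h, map_add, ContinuousLinearMap.map_smul, ContinuousLinearMap.map_smul,
        smul_eq_mul, smul_eq_mul]
    have h1 : (∫ θ in (0 : ℝ)..(2 * Real.pi), f θ)
        = ∫ θ in (0 : ℝ)..(2 * Real.pi), (2 * φ (0, 0)
            - (fderiv ℝ φ (0, 0) (1, 0) * Real.cos θ ^ 2
              + fderiv ℝ φ (0, 0) (0, 1) * (Real.sin θ * Real.cos θ))) := by
      apply intervalIntegral.integral_congr
      intro θ _
      simp only [hf]
      rw [hlin θ]
      ring
    have i1 : IntervalIntegrable (fun _ : ℝ => 2 * φ (0, 0)) volume 0 (2 * Real.pi) :=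
      intervalIntegrable_const
    have i2 : IntervalIntegrable
        (fun θ : ℝ => fderiv ℝ φ (0, 0) (1, 0) * Real.cos θ ^ 2) volume 0 (2 * Real.pi) :=
      (by fun_prop :
        Continuous fun θ : ℝ => fderiv ℝ φ (0, 0) (1, 0) * Real.cos θ ^ 2).intervalIntegrable _ _
    have i3 : IntervalIntegrable
        (fun θ : ℝ => fderiv ℝ φ (0, 0) (0, 1) * (Real.sin θ * Real.cos θ)) volume
        0 (2 * Real.pi) :=
      (by fun_prop : Continuous fun θ : ℝ =>
        fderiv ℝ φ (0, 0) (0, 1) * (Real.sin θ * Real.cos θ)).intervalIntegrable _ _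
    rw [h1, intervalIntegral.integral_sub i1 (i2.add i3),
      intervalIntegral.integral_add i2 i3,
      intervalIntegral.integral_const, intervalIntegral.integral_const_mul,
      intervalIntegral.integral_const_mul, integral_cos_sq, integral_sin_mul_cos₁]
    simp [Real.sin_two_pi, Real.cos_two_pi]
    ring
  rw [hval] at hdct
  exact Filter.Tendsto.congr' (hee.mono fun ε h => h.symm) hdct
end
end
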